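/- arXiv:1501.05826 — 14 statements merged into one kernel-verified Lean document; each statement's English description precedes it below -/
import Mathlib

section
/- Let (p_i)_{i∈I} be a finite family of real polynomials and let S ⊆ ℝ belong to latticeClosure(A), where A is the collection of all associated atomic sets {x ∈ ℝ : p_i(x) ρ 0} for i ∈ I and ρ ∈ {=, ≠, <, ≤, ≥, >}. If S is nonempty and bounded below, then there exists i ∈ I such that p_i has positive degree and p_i(sInf S) = 0. -/
open Polynomial Filter Set Topology

inductive SignRel | eq | ne | lt | le | ge | gt

def SignRel.holds : SignRel → ℝ → Prop
  | .eq, x => x = 0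
  | .ne, x => x ≠ 0
  | .lt, x => x < 0
  | .le, x => x ≤ 0
  | .ge, x => x ≥ 0
  | .gt, x => x > 0

theorem stmt0 {I : Type*} [Fintype I] (p : I → Polynomial ℝ)
    (A : Set (Set ℝ))
    (hA : A = {S | ∃ (i : I) (ρ : SignRel), S = {x : ℝ | ρ.holds ((p i).eval x)}})
    (S : Set ℝ) (hS : S ∈ latticeClosure A)
    (hne : S.Nonempty) (hbdd : BddBelow S) :
    ∃ i : I, 0 < (p i).natDegree ∧ (p i).eval (sInf S) = 0 := by
  by_contra h
  push_neg at h
  set m := sInf S with hm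
  -- sign stability near m for each polynomial
  have key : ∀ i : I, ∀ᶠ y in 𝓝 m, ∀ ρ : SignRel,
      ρ.holds ((p i).eval y) ↔ ρ.holds ((p i).eval m) := by
    intro i
    rcases Nat.eq_zero_or_pos (p i).natDegree with h0 | hpos
    · have hc : p i = Polynomial.C ((p i).coeff 0) :=
        Polynomial.eq_C_of_natDegree_eq_zero h0
      filter_upwards with y ρ
      rw [hc]; simp
    · have hne0 : (p i).eval m ≠ 0 := fun hz => h i hpos hz
      rcases lt_or_gt_of_ne hne0 with hlt | hgt
      · have : ∀ᶠ y in 𝓝 m, (p i).eval y < 0 :=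
          (((p i).continuous.continuousAt (x := m))).eventually (eventually_lt_nhds hlt)
        filter_upwards [this] with y hy ρ
        cases ρ <;> simp [SignRel.holds] <;> constructor <;> intro <;> linarith
      · have : ∀ᶠ y in 𝓝 m, 0 < (p i).eval y :=
          (((p i).continuous.continuousAt (x := m))).eventually (eventually_gt_nhds hgt)
        filter_upwards [this] with y hy ρ
        cases ρ <;> simp [SignRel.holds] <;> constructor <;> intro <;> linarith
  have keyall : ∀ᶠ y in 𝓝 m, ∀ i : I, ∀ ρ : SignRel,
      ρ.holds ((p i).eval y) ↔ ρ.holds ((p i).eval m) := eventually_all.2 key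
  rw [Metric.eventually_nhds_iff] at keyall
  obtain ⟨ε, hε, hball⟩ := keyall
  -- S is locally constant at m
  set G : Set (Set ℝ) := {T | ∀ y : ℝ, dist y m < ε → (y ∈ T ↔ m ∈ T)} with hG
  have hAG : A ⊆ G := by
    rintro T hT
    rw [hA] at hT
    obtain ⟨i, ρ, rfl⟩ := hT
    intro y hy
    simpa using hball hy i ρ
  have hGlat : IsSublattice G := by
    constructor
    · intro T hT U hU y hy
      have h1 := hT y hy
      have h2 := hU y hy
      simp only [Set.sup_eq_union, Set.mem_union]
      tauto
    · intro T hT U hU y hy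
      have h1 := hT y hy
      have h2 := hU y hy
      simp only [Set.inf_eq_inter, Set.mem_inter_iff]
      tauto
  have hSG : S ∈ G := latticeClosure_min hAG hGlat hS
  -- get a point of S close to m
  have hlt : m < m + ε := by linarith
  obtain ⟨s, hsS, hs⟩ := (csInf_lt_iff hbdd hne).1 hlt
  have hms : m ≤ s := csInf_le hbdd hsS
  have hmem : m ∈ S := by
    have : dist s m < ε := by rw [Real.dist_eq]; rw [abs_lt]; constructor <;> linarith
    exact (hSG s this).1 hsS
  have hy : m - ε / 2 ∈ S := by
    have : dist (m - ε / 2) m < ε := by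
      rw [Real.dist_eq, abs_lt]; constructor <;> linarith
    exact (hSG _ this).2 hmem
  have := csInf_le hbdd hy
  linarith
end

section
/- Let (p_i)_{i∈I} be a finite family of real polynomials and let S ⊆ ℝ belong to latticeClosure(A), where A is the collection of all associated atomic sets {x ∈ ℝ : p_i(x) ρ 0} for i ∈ I and ρ ∈ {=, ≠, <, ≤, ≥, >}. Then S is a finite union of order-connected subsets of ℝ, i.e., there exists a finite family (T_j)_{j∈J} of subsets of ℝ, each of which is ordConnected (an interval), such that S = ⋃_{j∈J} T_j. -/
open Polynomial Filter Set Topology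

namespace Aux

noncomputable local instance : DecidableEq (Set ℝ) := Classical.decEq _

/-- The property of being a finite union of ordConnected sets. -/
def P (S : Set ℝ) : Prop :=
  ∃ F : Finset (Set ℝ), (∀ T ∈ F, T.OrdConnected) ∧ S = ⋃₀ ↑F

lemma P_empty : P ∅ := ⟨∅, by simp⟩

lemma P_univ : P Set.univ := ⟨{Set.univ}, by simp [Set.ordConnected_univ]⟩

lemma P_union {S₁ S₂ : Set ℝ} (h₁ : P S₁) (h₂ : P S₂) : P (S₁ ∪ S₂) := by
  obtain ⟨F₁, hF₁, rfl⟩ := h₁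
  obtain ⟨F₂, hF₂, rfl⟩ := h₂
  refine ⟨F₁ ∪ F₂, ?_, ?_⟩
  · intro T hT
    rcases Finset.mem_union.1 hT with h | h
    · exact hF₁ T h
    · exact hF₂ T h
  · simp [Finset.coe_union, Set.sUnion_union]

lemma P_inter {S₁ S₂ : Set ℝ} (h₁ : P S₁) (h₂ : P S₂) : P (S₁ ∩ S₂) := by
  obtain ⟨F₁, hF₁, rfl⟩ := h₁
  obtain ⟨F₂, hF₂, rfl⟩ := h₂
  refine ⟨(F₁ ×ˢ F₂).image (fun tg => tg.1 ∩ tg.2), ?_, ?_⟩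
  · intro T hT
    simp only [Finset.mem_image, Finset.mem_product] at hT
    obtain ⟨⟨a, b⟩, ⟨ha, hb⟩, rfl⟩ := hT
    exact (hF₁ a ha).inter (hF₂ b hb)
  · ext x
    simp only [Set.mem_inter_iff, Set.mem_sUnion, Finset.coe_image, Set.mem_image,
      Finset.mem_coe, Finset.mem_product]
    constructor
    · rintro ⟨⟨a, ha, hxa⟩, ⟨b, hb, hxb⟩⟩
      exact ⟨a ∩ b, ⟨⟨a, b⟩, ⟨ha, hb⟩, rfl⟩, hxa, hxb⟩
    · rintro ⟨T, ⟨⟨a, b⟩, ⟨ha, hb⟩, rfl⟩, hxa, hxb⟩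
      exact ⟨⟨a, ha, hxa⟩, ⟨b, hb, hxb⟩⟩

/-- Candidate cells determined by a finite set `Z`. -/
noncomputable def cells (Z : Finset ℝ) : Finset (Set ℝ) :=
  (Z.image Set.Iio) ∪ (Z.image Set.Ioi) ∪
    ((Z ×ˢ Z).image (fun ab => Set.Ioo ab.1 ab.2)) ∪ {Set.univ}

lemma cells_ordConnected {Z : Finset ℝ} {T : Set ℝ} (hT : T ∈ cells Z) :
    T.OrdConnected := by
  simp only [cells, Finset.mem_union, Finset.mem_image, Finset.mem_singleton,
    Finset.mem_product] at hT
  rcases hT with (((⟨a, _, rfl⟩ | ⟨a, _, rfl⟩) | ⟨⟨a, b⟩, _, rfl⟩) | rfl)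
  · exact Set.ordConnected_Iio
  · exact Set.ordConnected_Ioi
  · exact Set.ordConnected_Ioo
  · exact Set.ordConnected_univ

lemma cells_cover {Z : Finset ℝ} {x : ℝ} (hx : x ∉ Z) :
    ∃ T ∈ cells Z, x ∈ T ∧ ∀ z ∈ Z, z ∉ T := by
  classical
  set L : Finset ℝ := Z.filter (· < x) with hL
  set R : Finset ℝ := Z.filter (x < ·) with hR
  have hZmem : ∀ z ∈ Z, z < x ∨ x < z := by
    intro z hz
    rcases lt_trichotomy z x with h | h | h
    · exact Or.inl h
    · exact absurd (h ▸ hz) hx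
    · exact Or.inr h
  by_cases hLne : L.Nonempty <;> by_cases hRne : R.Nonempty
  · refine ⟨Set.Ioo (L.max' hLne) (R.min' hRne), ?_, ?_, ?_⟩
    · simp only [cells, Finset.mem_union, Finset.mem_image, Finset.mem_product]
      exact Or.inl (Or.inr ⟨⟨L.max' hLne, R.min' hRne⟩,
        ⟨(Finset.mem_filter.1 (L.max'_mem hLne)).1,
         (Finset.mem_filter.1 (R.min'_mem hRne)).1⟩, rfl⟩)
    · exact ⟨(Finset.mem_filter.1 (L.max'_mem hLne)).2,
        (Finset.mem_filter.1 (R.min'_mem hRne)).2⟩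
    · rintro z hz ⟨h1, h2⟩
      rcases hZmem z hz with h | h
      · exact absurd (Finset.le_max' L z (Finset.mem_filter.2 ⟨hz, h⟩)) (not_le.2 h1)
      · exact absurd (Finset.min'_le R z (Finset.mem_filter.2 ⟨hz, h⟩)) (not_le.2 h2)
  · refine ⟨Set.Ioi (L.max' hLne), ?_, ?_, ?_⟩
    · simp only [cells, Finset.mem_union, Finset.mem_image]
      exact Or.inl (Or.inl (Or.inr ⟨L.max' hLne,
        (Finset.mem_filter.1 (L.max'_mem hLne)).1, rfl⟩))
    · exact (Finset.mem_filter.1 (L.max'_mem hLne)).2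
    · intro z hz h1
      rcases hZmem z hz with h | h
      · exact absurd (Finset.le_max' L z (Finset.mem_filter.2 ⟨hz, h⟩))
          (not_le.2 h1)
      · exact hRne ⟨z, Finset.mem_filter.2 ⟨hz, h⟩⟩
  · refine ⟨Set.Iio (R.min' hRne), ?_, ?_, ?_⟩
    · simp only [cells, Finset.mem_union, Finset.mem_image]
      exact Or.inl (Or.inl (Or.inl ⟨R.min' hRne,
        (Finset.mem_filter.1 (R.min'_mem hRne)).1, rfl⟩))
    · exact (Finset.mem_filter.1 (R.min'_mem hRne)).2
    · intro z hz h1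
      rcases hZmem z hz with h | h
      · exact hLne ⟨z, Finset.mem_filter.2 ⟨hz, h⟩⟩
      · exact absurd (Finset.min'_le R z (Finset.mem_filter.2 ⟨hz, h⟩)) (not_le.2 h1)
  · refine ⟨Set.univ, ?_, Set.mem_univ x, ?_⟩
    · simp [cells]
    · intro z hz _
      rcases hZmem z hz with h | h
      · exact hLne ⟨z, Finset.mem_filter.2 ⟨hz, h⟩⟩
      · exact hRne ⟨z, Finset.mem_filter.2 ⟨hz, h⟩⟩

lemma neg_on_ordConnected {q : Polynomial ℝ} {T : Set ℝ}
    (hT : T.OrdConnected) (hnz : ∀ y ∈ T, q.eval y ≠ 0) {x : ℝ} (hx : x ∈ T)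
    (hneg : q.eval x < 0) : ∀ y ∈ T, q.eval y < 0 := by
  intro y hy
  by_contra h
  have hpos : 0 < q.eval y := lt_of_le_of_ne (not_lt.1 h) (Ne.symm (hnz y hy))
  have hcont : ContinuousOn (fun t => q.eval t) (Set.uIcc x y) :=
    (Polynomial.continuous q).continuousOn
  have h0 : (0 : ℝ) ∈ Set.uIcc (q.eval x) (q.eval y) :=
    Set.mem_uIcc.2 (Or.inl ⟨hneg.le, hpos.le⟩)
  have := intermediate_value_uIcc hcont h0
  obtain ⟨z, hz, hz0⟩ := this
  exact hnz z (hT.uIcc_subset hx hy hz) hz0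

lemma P_lt (q : Polynomial ℝ) : P {x : ℝ | q.eval x < 0} := by
  classical
  by_cases hq : q = 0
  · subst hq
    simpa using P_empty
  · set Z : Finset ℝ := q.roots.toFinset with hZ
    have hZroot : ∀ z, z ∈ Z ↔ q.eval z = 0 := by
      intro z
      simp [hZ, Multiset.mem_toFinset, Polynomial.mem_roots, hq, Polynomial.IsRoot]
    refine ⟨(cells Z).filter (· ⊆ {x : ℝ | q.eval x < 0}), ?_, ?_⟩
    · intro T hT
      exact cells_ordConnected (Finset.mem_filter.1 hT).1
    · ext x
      simp only [Set.mem_setOf_eq, Set.mem_sUnion, Finset.coe_filter,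
        Set.mem_setOf_eq, Finset.mem_coe]
      constructor
      · intro hx
        have hxZ : x ∉ Z := by
          rw [hZroot]
          exact ne_of_lt hx
        obtain ⟨T, hTc, hxT, hTZ⟩ := cells_cover hxZ
        have hnz : ∀ y ∈ T, q.eval y ≠ 0 := by
          intro y hy h0
          exact hTZ y ((hZroot y).2 h0) hy
        have hsub : T ⊆ {x : ℝ | q.eval x < 0} :=
          fun y hy => neg_on_ordConnected (cells_ordConnected hTc) hnz hxT hx y hy
        exact ⟨T, ⟨hTc, hsub⟩, hxT⟩
      · rintro ⟨T, ⟨_, hsub⟩, hxT⟩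
        exact hsub hxT

lemma P_eq (q : Polynomial ℝ) : P {x : ℝ | q.eval x = 0} := by
  classical
  by_cases hq : q = 0
  · subst hq
    simpa using P_univ
  · refine ⟨q.roots.toFinset.image (fun a => ({a} : Set ℝ)), ?_, ?_⟩
    · intro T hT
      obtain ⟨a, _, rfl⟩ := Finset.mem_image.1 hT
      exact Set.ordConnected_singleton
    · ext x
      simp only [Set.mem_setOf_eq, Set.mem_sUnion, Finset.coe_image, Set.mem_image,
        Finset.mem_coe, Multiset.mem_toFinset, Polynomial.mem_roots', hq,
        Polynomial.IsRoot, ne_eq, not_false_eq_true, true_and]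
      constructor
      · intro h
        exact ⟨{x}, ⟨x, h, rfl⟩, rfl⟩
      · rintro ⟨T, ⟨a, ha, rfl⟩, hxa⟩
        rw [Set.mem_singleton_iff.1 hxa]
        exact ha

lemma P_gt (q : Polynomial ℝ) : P {x : ℝ | 0 < q.eval x} := by
  have : {x : ℝ | 0 < q.eval x} = {x : ℝ | (-q).eval x < 0} := by
    ext x; simp [neg_pos]
  rw [this]
  exact P_lt (-q)

lemma P_atom (q : Polynomial ℝ) (ρ : SignRel) :
    P {x : ℝ | ρ.holds (q.eval x)} := by
  cases ρ with
  | eq => exact P_eq q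
  | ne =>
      have : {x : ℝ | SignRel.holds .ne (q.eval x)}
          = {x : ℝ | q.eval x < 0} ∪ {x : ℝ | 0 < q.eval x} := by
        ext x
        simp only [SignRel.holds, Set.mem_setOf_eq, Set.mem_union]
        exact ⟨fun h => h.lt_or_gt, fun h => h.elim ne_of_lt (fun h => (ne_of_lt h).symm)⟩
      rw [this]; exact P_union (P_lt q) (P_gt q)
  | lt => exact P_lt q
  | le =>
      have : {x : ℝ | SignRel.holds .le (q.eval x)}
          = {x : ℝ | q.eval x < 0} ∪ {x : ℝ | q.eval x = 0} := by
        ext x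
        simp only [SignRel.holds, Set.mem_setOf_eq, Set.mem_union]
        exact le_iff_lt_or_eq
      rw [this]; exact P_union (P_lt q) (P_eq q)
  | ge =>
      have : {x : ℝ | SignRel.holds .ge (q.eval x)}
          = {x : ℝ | 0 < q.eval x} ∪ {x : ℝ | q.eval x = 0} := by
        ext x
        simp only [SignRel.holds, Set.mem_setOf_eq, Set.mem_union, ge_iff_le]
        constructor
        · intro h; rcases h.lt_or_eq with h | h
          · exact Or.inl h
          · exact Or.inr h.symm
        · rintro (h | h)
          · exact h.le
          · exact h.ge
      rw [this]; exact P_union (P_gt q) (P_eq q)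
  | gt => exact P_gt q

end Aux

theorem stmt1 {I : Type*} [Fintype I] (p : I → Polynomial ℝ)
    (A : Set (Set ℝ))
    (hA : A = {S | ∃ (i : I) (ρ : SignRel), S = {x : ℝ | ρ.holds ((p i).eval x)}})
    (S : Set ℝ) (hS : S ∈ latticeClosure A) :
    ∃ F : Finset (Set ℝ), (∀ T ∈ F, T.OrdConnected) ∧ S = ⋃₀ ↑F := by
  have key : latticeClosure A ⊆ {S | Aux.P S} := by
    refine latticeClosure_min ?_ ?_
    · intro T hT
      rw [hA] at hT
      obtain ⟨i, ρ, rfl⟩ := hT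
      exact Aux.P_atom (p i) ρ
    · exact ⟨fun _ h1 _ h2 => Aux.P_union h1 h2, fun _ h1 _ h2 => Aux.P_inter h1 h2⟩
  exact key hS
end

section
/- Let E, N, L, Le, Ge, G be six finite families of real polynomials, and let A be the collection of atomic sets consisting of {x : p(x) = 0} for p ∈ E, {x : p(x) ≠ 0} for p ∈ N, {x : p(x) < 0} for p ∈ L, {x : p(x) ≤ 0} for p ∈ Le, {x : p(x) ≥ 0} for p ∈ Ge, and {x : p(x) > 0} for p ∈ G. Let S ∈ latticeClosure(A) be nonempty and bounded below, and set ξ = sInf S. If ξ ∈ S, then at least one of the following holds: (a) there is p ∈ E with positive degree and p(ξ) = 0; (b) there is p ∈ Le with positive degree, p(ξ) = 0, and ∀ᶠ t in 𝓝[<] ξ, p(t) > 0; (c) there is p ∈ Ge with positive degree, p(ξ) = 0, and ∀ᶠ t in 𝓝[<] ξ, p(t) < 0. -/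
open Polynomial Filter Set Topology

lemma poly_sign_left (p : Polynomial ℝ) (hp : p ≠ 0) (ξ : ℝ) :
    (∀ᶠ t in 𝓝[<] ξ, p.eval t > 0) ∨ (∀ᶠ t in 𝓝[<] ξ, p.eval t < 0) := by
  have hfin : {x : ℝ | p.IsRoot x}.Finite := Polynomial.finite_setOf_isRoot hp
  obtain ⟨a, ha, hroot⟩ : ∃ a < ξ, ∀ t ∈ Ioo a ξ, p.eval t ≠ 0 := by
    classical
    set F : Finset ℝ := hfin.toFinset.filter (· < ξ) with hF
    by_cases hFne : F.Nonempty
    · refine ⟨F.max' hFne, ?_, ?_⟩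
      · have := Finset.mem_filter.mp (F.max'_mem hFne)
        exact this.2
      · intro t ht hz
        have htF : t ∈ F := by
          simp [hF, Finset.mem_filter, Set.Finite.mem_toFinset]
          exact ⟨hz, ht.2⟩
        exact absurd (F.le_max' t htF) (not_le.mpr ht.1)
    · refine ⟨ξ - 1, by linarith, ?_⟩
      intro t ht hz
      exact hFne ⟨t, by simp [hF, Finset.mem_filter, Set.Finite.mem_toFinset]; exact ⟨hz, ht.2⟩⟩
  have hIoo : Ioo a ξ ∈ 𝓝[<] ξ := Ioo_mem_nhdsLT ha
  have ht0 : (a + ξ) / 2 ∈ Ioo a ξ := ⟨by linarith, by linarith⟩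
  set t0 := (a + ξ) / 2
  have key : ∀ t ∈ Ioo a ξ, (0 < p.eval t ↔ 0 < p.eval t0) := by
    intro t ht
    constructor
    · intro hpt
      by_contra h
      have h' : p.eval t0 < 0 := lt_of_le_of_ne (not_lt.mp h) (hroot t0 ht0)
      have := intermediate_value_uIcc (a := t) (b := t0)
        (f := fun x => p.eval x) (p.continuous.continuousOn)
      have h0 : (0 : ℝ) ∈ uIcc (p.eval t) (p.eval t0) := by
        rw [Set.mem_uIcc]; right; exact ⟨h'.le, hpt.le⟩
      obtain ⟨c, hc, hc0⟩ := this h0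
      have hcI : c ∈ Ioo a ξ := ordConnected_Ioo.uIcc_subset ht ht0 hc
      exact hroot c hcI hc0
    · intro hpt0
      by_contra h
      have h' : p.eval t < 0 := lt_of_le_of_ne (not_lt.mp h) (hroot t ht)
      have := intermediate_value_uIcc (a := t) (b := t0)
        (f := fun x => p.eval x) (p.continuous.continuousOn)
      have h0 : (0 : ℝ) ∈ uIcc (p.eval t) (p.eval t0) := by
        rw [Set.mem_uIcc]; left; exact ⟨h'.le, hpt0.le⟩
      obtain ⟨c, hc, hc0⟩ := this h0
      have hcI : c ∈ Ioo a ξ := ordConnected_Ioo.uIcc_subset ht ht0 hc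
      exact hroot c hcI hc0
  rcases (hroot t0 ht0).lt_or_gt with h | h
  · right
    filter_upwards [hIoo] with t ht
    by_contra hle
    have : 0 < p.eval t := lt_of_le_of_ne (not_lt.mp hle) (Ne.symm (hroot t ht))
    exact absurd ((key t ht).mp this) (not_lt.mpr h.le)
  · left
    filter_upwards [hIoo] with t ht
    exact (key t ht).mpr h

lemma root_pos_natDegree {p : Polynomial ℝ} (hp : p ≠ 0) {x : ℝ} (hx : p.eval x = 0) :
    0 < p.natDegree := by
  by_contra h
  push_neg at h
  have hd : p.natDegree = 0 := Nat.le_zero.mp h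
  have hc := Polynomial.eq_C_of_natDegree_eq_zero hd
  rw [hc, Polynomial.eval_C] at hx
  exact hp (by rw [hc, hx, map_zero])

theorem stmt2 (E N L Le Ge G : Finset (Polynomial ℝ))
    (A : Set (Set ℝ))
    (hA : A = {S | (∃ p ∈ E, S = {x : ℝ | p.eval x = 0}) ∨
                   (∃ p ∈ N, S = {x : ℝ | p.eval x ≠ 0}) ∨
                   (∃ p ∈ L, S = {x : ℝ | p.eval x < 0}) ∨
                   (∃ p ∈ Le, S = {x : ℝ | p.eval x ≤ 0}) ∨
                   (∃ p ∈ Ge, S = {x : ℝ | p.eval x ≥ 0}) ∨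
                   (∃ p ∈ G, S = {x : ℝ | p.eval x > 0})})
    (S : Set ℝ) (hS : S ∈ latticeClosure A)
    (hne : S.Nonempty) (hbdd : BddBelow S)
    (ξ : ℝ) (hξ : ξ = sInf S) (hmem : ξ ∈ S) :
    (∃ p ∈ E, 0 < p.natDegree ∧ p.eval ξ = 0) ∨
    (∃ p ∈ Le, 0 < p.natDegree ∧ p.eval ξ = 0 ∧ ∀ᶠ t in 𝓝[<] ξ, p.eval t > 0) ∨
    (∃ p ∈ Ge, 0 < p.natDegree ∧ p.eval ξ = 0 ∧ ∀ᶠ t in 𝓝[<] ξ, p.eval t < 0) := by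
  set C : Prop :=
    (∃ p ∈ E, 0 < p.natDegree ∧ p.eval ξ = 0) ∨
    (∃ p ∈ Le, 0 < p.natDegree ∧ p.eval ξ = 0 ∧ ∀ᶠ t in 𝓝[<] ξ, p.eval t > 0) ∨
    (∃ p ∈ Ge, 0 < p.natDegree ∧ p.eval ξ = 0 ∧ ∀ᶠ t in 𝓝[<] ξ, p.eval t < 0) with hC
  show C
  set P : Set (Set ℝ) := {T | ξ ∈ T → (∀ᶠ t in 𝓝[<] ξ, t ∈ T) ∨ C} with hP
  have hsub : A ⊆ P := by
    rintro T hT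
    rw [hA] at hT
    intro hξT
    rcases hT with ⟨p, hpE, rfl⟩ | ⟨p, hpN, rfl⟩ | ⟨p, hpL, rfl⟩ | ⟨p, hpLe, rfl⟩ |
      ⟨p, hpGe, rfl⟩ | ⟨p, hpG, rfl⟩
    · -- equalities
      by_cases hp : p = 0
      · subst hp; left; filter_upwards with t; simp
      · right; rw [hC]; exact Or.inl ⟨p, hpE, root_pos_natDegree hp hξT, hξT⟩
    · -- ≠ 0
      left
      have : ∀ᶠ t in 𝓝 ξ, p.eval t ≠ 0 :=
        (isOpen_ne_fun p.continuous continuous_const).eventually_mem hξT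
      exact this.filter_mono nhdsWithin_le_nhds
    · -- < 0
      left
      have : ∀ᶠ t in 𝓝 ξ, p.eval t < 0 :=
        (isOpen_lt p.continuous continuous_const).eventually_mem hξT
      exact this.filter_mono nhdsWithin_le_nhds
    · -- ≤ 0
      have hle : p.eval ξ ≤ 0 := hξT
      rcases lt_or_eq_of_le hle with h | h
      · left
        have : ∀ᶠ t in 𝓝 ξ, p.eval t < 0 :=
          (isOpen_lt p.continuous continuous_const).eventually_mem h
        exact (this.filter_mono nhdsWithin_le_nhds).mono fun t ht => ht.le
      · by_cases hp : p = 0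
        · subst hp; left; filter_upwards with t; simp
        · rcases poly_sign_left p hp ξ with hpos | hneg
          · right; rw [hC]
            exact Or.inr (Or.inl ⟨p, hpLe, root_pos_natDegree hp h, h, hpos⟩)
          · left; exact hneg.mono fun t ht => ht.le
    · -- ≥ 0
      have hle : (0 : ℝ) ≤ p.eval ξ := hξT
      rcases hle.lt_or_eq with h | h
      · left
        have : ∀ᶠ t in 𝓝 ξ, 0 < p.eval t :=
          (isOpen_lt continuous_const p.continuous).eventually_mem h
        exact (this.filter_mono nhdsWithin_le_nhds).mono fun t ht => ht.le
      · by_cases hp : p = 0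
        · subst hp; left; filter_upwards with t; simp
        · rcases poly_sign_left p hp ξ with hpos | hneg
          · left; exact hpos.mono fun t ht => ht.le
          · right; rw [hC]
            exact Or.inr (Or.inr ⟨p, hpGe, root_pos_natDegree hp h.symm, h.symm, hneg⟩)
    · -- > 0
      left
      have : ∀ᶠ t in 𝓝 ξ, 0 < p.eval t :=
        (isOpen_lt continuous_const p.continuous).eventually_mem hξT
      exact this.filter_mono nhdsWithin_le_nhds
  have hlat : IsSublattice P := by
    constructor
    · intro T₁ h₁ T₂ h₂ hξT
      rcases (hξT : ξ ∈ T₁ ∪ T₂) with h | h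
      · rcases h₁ h with hev | hc
        · exact Or.inl (hev.mono fun t ht => Or.inl ht)
        · exact Or.inr hc
      · rcases h₂ h with hev | hc
        · exact Or.inl (hev.mono fun t ht => Or.inr ht)
        · exact Or.inr hc
    · intro T₁ h₁ T₂ h₂ hξT
      obtain ⟨hm1, hm2⟩ := (hξT : ξ ∈ T₁ ∩ T₂)
      rcases h₁ hm1 with hev1 | hc
      · rcases h₂ hm2 with hev2 | hc
        · exact Or.inl ((hev1.and hev2).mono fun t ht => ht)
        · exact Or.inr hc
      · exact Or.inr hc
  have hSP : S ∈ P := latticeClosure_min hsub hlat hS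
  rcases hSP hmem with hev | hc
  · exfalso
    obtain ⟨t, ht, htS⟩ := ((hev.and (eventually_mem_nhdsWithin)).exists)
    have : sInf S ≤ t := csInf_le hbdd ht
    rw [← hξ] at this
    exact absurd htS (not_lt.mpr this)
  · exact hc
end

section
/- Let E, N, L, Le, Ge, G be six finite families of real polynomials, and let A be the collection of atomic sets consisting of {x : p(x) = 0} for p ∈ E, {x : p(x) ≠ 0} for p ∈ N, {x : p(x) < 0} for p ∈ L, {x : p(x) ≤ 0} for p ∈ Le, {x : p(x) ≥ 0} for p ∈ Ge, and {x : p(x) > 0} for p ∈ G. Let S ∈ latticeClosure(A) be nonempty and bounded below, and set ξ = sInf S. If ξ ∉ S, then at least one of the following holds: (a) there is p ∈ N with positive degree and p(ξ) = 0; (b) there is p ∈ L with positive degree, p(ξ) = 0, and ∀ᶠ t in 𝓝[>] ξ, p(t) < 0; (c) there is p ∈ G with positive degree, p(ξ) = 0, and ∀ᶠ t in 𝓝[>] ξ, p(t) > 0. -/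
open Polynomial Filter Set Topology

/-- Every real polynomial has eventually constant sign just to the right of any point. -/
lemma poly_sign_trichotomy (ξ : ℝ) (p : Polynomial ℝ) :
    (∀ᶠ t in 𝓝[>] ξ, p.eval t < 0) ∨ (∀ᶠ t in 𝓝[>] ξ, p.eval t = 0) ∨
    (∀ᶠ t in 𝓝[>] ξ, 0 < p.eval t) := by
  by_cases hp : p = 0
  · exact Or.inr (Or.inl (by simp [hp]))
  set k := p.rootMultiplicity ξ with hk
  set q := p /ₘ (X - C ξ) ^ k with hq
  have hfac : ∀ t, p.eval t = (t - ξ) ^ k * q.eval t := by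
    intro t
    conv_lhs => rw [← pow_mul_divByMonic_rootMultiplicity_eq p ξ]
    simp [hq, hk]
  have hq0 : q.eval ξ ≠ 0 := eval_divByMonic_pow_rootMultiplicity_ne_zero ξ hp
  have hcont : ContinuousAt (fun t => q.eval t) ξ := (Polynomial.continuous q).continuousAt
  have hqsign : ∀ᶠ t in 𝓝[>] ξ, (q.eval t < 0 ↔ q.eval ξ < 0) ∧ q.eval t ≠ 0 := by
    rcases lt_or_gt_of_ne hq0 with h | h
    · have : ∀ᶠ t in 𝓝 ξ, q.eval t < 0 :=
        hcont.eventually_lt (continuousAt_const) h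
      exact (this.filter_mono nhdsWithin_le_nhds).mono fun t ht => ⟨by simp [ht, h], ht.ne⟩
    · have : ∀ᶠ t in 𝓝 ξ, 0 < q.eval t :=
        (continuousAt_const (y := (0:ℝ))).eventually_lt hcont h
      exact (this.filter_mono nhdsWithin_le_nhds).mono fun t ht =>
        ⟨by simp [not_lt.2 ht.le, not_lt.2 h.le], ht.ne'⟩
  rcases lt_or_gt_of_ne hq0 with h | h
  · left
    filter_upwards [hqsign, self_mem_nhdsWithin] with t ht htmem
    have hpos : (0:ℝ) < (t - ξ) ^ k := pow_pos (by simpa using (htmem : ξ < t)) k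
    rw [hfac t]
    exact mul_neg_of_pos_of_neg hpos (ht.1.2 h)
  · right; right
    filter_upwards [hqsign, self_mem_nhdsWithin] with t ht htmem
    have hpos : (0:ℝ) < (t - ξ) ^ k := pow_pos (by simpa using (htmem : ξ < t)) k
    rw [hfac t]
    have : 0 < q.eval t := lt_of_le_of_ne (not_lt.1 (fun hc => h.not_gt (ht.1.1 hc))) (Ne.symm ht.2)
    exact mul_pos hpos this

theorem stmt3 (E N L Le Ge G : Finset (Polynomial ℝ))
    (A : Set (Set ℝ))
    (hA : A = {S | (∃ p ∈ E, S = {x : ℝ | p.eval x = 0}) ∨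
                   (∃ p ∈ N, S = {x : ℝ | p.eval x ≠ 0}) ∨
                   (∃ p ∈ L, S = {x : ℝ | p.eval x < 0}) ∨
                   (∃ p ∈ Le, S = {x : ℝ | p.eval x ≤ 0}) ∨
                   (∃ p ∈ Ge, S = {x : ℝ | p.eval x ≥ 0}) ∨
                   (∃ p ∈ G, S = {x : ℝ | p.eval x > 0})})
    (S : Set ℝ) (hS : S ∈ latticeClosure A)
    (hne : S.Nonempty) (hbdd : BddBelow S)
    (ξ : ℝ) (hξ : ξ = sInf S) (hmem : ξ ∉ S) :
    (∃ p ∈ N, 0 < p.natDegree ∧ p.eval ξ = 0) ∨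
    (∃ p ∈ L, 0 < p.natDegree ∧ p.eval ξ = 0 ∧ ∀ᶠ t in 𝓝[>] ξ, p.eval t < 0) ∨
    (∃ p ∈ G, 0 < p.natDegree ∧ p.eval ξ = 0 ∧ ∀ᶠ t in 𝓝[>] ξ, p.eval t > 0) := by
  set F := 𝓝[>] ξ with hF
  have hFne : F.NeBot := nhdsGT_neBot ξ
  set Goal : Prop :=
    (∃ p ∈ N, 0 < p.natDegree ∧ p.eval ξ = 0) ∨
    (∃ p ∈ L, 0 < p.natDegree ∧ p.eval ξ = 0 ∧ ∀ᶠ t in F, p.eval t < 0) ∨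
    (∃ p ∈ G, 0 < p.natDegree ∧ p.eval ξ = 0 ∧ ∀ᶠ t in F, p.eval t > 0) with hGoal
  -- the "good" collection of sets
  set Good : Set (Set ℝ) :=
    {T | ((∀ᶠ t in F, t ∈ T) ∨ (∀ᶠ t in F, t ∉ T)) ∧
         ((∀ᶠ t in F, t ∈ T) → ξ ∉ T → Goal)} with hGood
  -- Good is a sublattice of Set ℝ
  have hsub : IsSublattice Good := by
    constructor
    · rintro T₁ h₁ T₂ h₂
      constructor
      · rcases h₁.1 with h | h
        · exact Or.inl (h.mono fun t ht => Or.inl ht)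
        · rcases h₂.1 with h' | h'
          · exact Or.inl (h'.mono fun t ht => Or.inr ht)
          · exact Or.inr ((h.and h').mono fun t ht => by
              rintro (hc | hc) <;> [exact ht.1 hc; exact ht.2 hc])
      · intro hev hnot
        have hn1 : ξ ∉ T₁ := fun hc => hnot (Or.inl hc)
        have hn2 : ξ ∉ T₂ := fun hc => hnot (Or.inr hc)
        rcases h₁.1 with h | h
        · exact h₁.2 h hn1
        · rcases h₂.1 with h' | h'
          · exact h₂.2 h' hn2
          · exfalso
            have : ∀ᶠ t in F, False := by
              filter_upwards [hev, h, h'] with t ht h1 h2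
              rcases ht with hc | hc; exacts [h1 hc, h2 hc]
            exact hFne.ne (by simpa using this)
    · rintro T₁ h₁ T₂ h₂
      constructor
      · rcases h₁.1 with h | h
        · rcases h₂.1 with h' | h'
          · exact Or.inl ((h.and h').mono fun t ht => ⟨ht.1, ht.2⟩)
          · exact Or.inr (h'.mono fun t ht hc => ht hc.2)
        · exact Or.inr (h.mono fun t ht hc => ht hc.1)
      · intro hev hnot
        have h1 : ∀ᶠ t in F, t ∈ T₁ := hev.mono fun t ht => ht.1
        have h2 : ∀ᶠ t in F, t ∈ T₂ := hev.mono fun t ht => ht.2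
        by_cases hξ1 : ξ ∈ T₁
        · exact h₂.2 h2 (fun hc => hnot ⟨hξ1, hc⟩)
        · exact h₁.2 h1 hξ1
  -- atoms are good
  have hbase : A ⊆ Good := by
    intro T hT
    rw [hA] at hT
    have hcontin : ∀ p : Polynomial ℝ, Filter.Tendsto (fun t => Polynomial.eval t p) F
        (𝓝 (p.eval ξ)) := fun p =>
      ((Polynomial.continuous p).continuousAt).continuousWithinAt.tendsto
    rcases hT with ⟨p, hp, rfl⟩ | ⟨p, hp, rfl⟩ | ⟨p, hp, rfl⟩ | ⟨p, hp, rfl⟩ |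
      ⟨p, hp, rfl⟩ | ⟨p, hp, rfl⟩
    · -- equations
      constructor
      · rcases poly_sign_trichotomy ξ p with h | h | h
        · exact Or.inr (h.mono fun t ht => by simpa using ht.ne)
        · exact Or.inl h
        · exact Or.inr (h.mono fun t ht => by simpa using ht.ne')
      · intro hev hnot
        exfalso
        apply hnot
        have : p.eval ξ = 0 := tendsto_nhds_unique (hcontin p)
          (by rw [Filter.tendsto_congr' (hev.mono fun t ht => ht)]; exact tendsto_const_nhds)
        exact this
    · -- disequations
      refine ⟨?_, ?_⟩
      · rcases poly_sign_trichotomy ξ p with h | h | h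
        · exact Or.inl (h.mono fun t ht => ht.ne)
        · exact Or.inr (h.mono fun t ht => by simpa using ht)
        · exact Or.inl (h.mono fun t ht => ht.ne')
      · intro hev hnot
        have h0 : p.eval ξ = 0 := by simpa using hnot
        have hdeg : 0 < p.natDegree := by
          rcases Nat.eq_zero_or_pos p.natDegree |>.symm with h | h
          · exact h
          · exfalso
            obtain ⟨c, rfl⟩ := Polynomial.natDegree_eq_zero.1 h
            have : c = 0 := by simpa using h0
            subst this
            obtain ⟨t, ht⟩ := hev.exists
            simp at ht
        exact Or.inl ⟨p, hp, hdeg, h0⟩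
    · -- strict inequalities p < 0
      refine ⟨?_, ?_⟩
      · rcases poly_sign_trichotomy ξ p with h | h | h
        · exact Or.inl h
        · exact Or.inr (h.mono fun t ht => by simp [ht])
        · exact Or.inr (h.mono fun t ht => by simp [not_lt.2 ht.le])
      · intro hev hnot
        have hle : p.eval ξ ≤ 0 := le_of_tendsto (hcontin p) (hev.mono fun t ht => ht.le)
        have h0 : p.eval ξ = 0 := le_antisymm hle (not_lt.1 (by simpa using hnot))
        have hpne : p ≠ 0 := by
          rintro rfl
          obtain ⟨t, ht⟩ := hev.exists
          simp at ht
        have hdeg : 0 < p.natDegree := by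
          rcases Nat.eq_zero_or_pos p.natDegree |>.symm with h | h
          · exact h
          · exfalso
            obtain ⟨c, rfl⟩ := Polynomial.natDegree_eq_zero.1 h
            have : c = 0 := by simpa using h0
            exact hpne (by simp [this])
        exact Or.inr (Or.inl ⟨p, hp, hdeg, h0, hev⟩)
    · -- weak inequalities p ≤ 0
      refine ⟨?_, ?_⟩
      · rcases poly_sign_trichotomy ξ p with h | h | h
        · exact Or.inl (h.mono fun t ht => ht.le)
        · exact Or.inl (h.mono fun t ht => ht.le)
        · exact Or.inr (h.mono fun t ht => by simp [not_le.2 ht])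
      · intro hev hnot
        exfalso
        have hle : p.eval ξ ≤ 0 := le_of_tendsto (hcontin p) (hev.mono fun t ht => ht)
        exact hnot hle
    · -- weak inequalities p ≥ 0
      refine ⟨?_, ?_⟩
      · rcases poly_sign_trichotomy ξ p with h | h | h
        · exact Or.inr (h.mono fun t ht => by simp [not_le.2 ht])
        · exact Or.inl (h.mono fun t ht => ht.ge)
        · exact Or.inl (h.mono fun t ht => ht.le)
      · intro hev hnot
        exfalso
        have hle : 0 ≤ p.eval ξ := ge_of_tendsto (hcontin p) (hev.mono fun t ht => ht)
        exact hnot hle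
    · -- strict inequalities p > 0
      refine ⟨?_, ?_⟩
      · rcases poly_sign_trichotomy ξ p with h | h | h
        · exact Or.inr (h.mono fun t ht => by simp [not_lt.2 ht.le])
        · exact Or.inr (h.mono fun t ht => by simp [ht])
        · exact Or.inl h
      · intro hev hnot
        have hge : 0 ≤ p.eval ξ := ge_of_tendsto (hcontin p) (hev.mono fun t ht => ht.le)
        have h0 : p.eval ξ = 0 := le_antisymm (not_lt.1 (by simpa using hnot)) hge
        have hpne : p ≠ 0 := by
          rintro rfl
          obtain ⟨t, ht⟩ := hev.exists
          simp at ht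
        have hdeg : 0 < p.natDegree := by
          rcases Nat.eq_zero_or_pos p.natDegree |>.symm with h | h
          · exact h
          · exfalso
            obtain ⟨c, rfl⟩ := Polynomial.natDegree_eq_zero.1 h
            have : c = 0 := by simpa using h0
            exact hpne (by simp [this])
        exact Or.inr (Or.inr ⟨p, hp, hdeg, h0, hev⟩)
  -- S is good
  have hSgood : S ∈ Good := latticeClosure_min hbase hsub hS
  -- S is frequently met along F
  have hSgt : ∀ s ∈ S, ξ < s := by
    intro s hs
    rcases lt_or_eq_of_le (hξ ▸ csInf_le hbdd hs) with h | h
    · exact h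
    · exact absurd (h ▸ hs) hmem
  have hnotout : ¬ (∀ᶠ t in F, t ∉ S) := by
    intro h
    rw [hF, eventually_nhdsWithin_iff] at h
    rcases Metric.eventually_nhds_iff.1 h with ⟨ε, hε, hball⟩
    have hlb : ξ + ε / 2 ≤ ξ := by
      rw [hξ]
      apply le_csInf hne
      intro s hs
      by_contra hc
      push_neg at hc
      have hsξ : ξ < s := hSgt s hs
      have : dist s ξ < ε := by
        rw [Real.dist_eq, abs_of_pos (by linarith)]
        linarith
      exact hball this hsξ hs
    linarith
  have hevS : ∀ᶠ t in F, t ∈ S := by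
    rcases hSgood.1 with h | h
    · exact h
    · exact absurd h hnotout
  exact hSgood.2 hevS hmem
end

section
/- Let n ≥ 1, let f ∈ ℝ[X] with natDegree f ≤ n, and let s = (s_1, …, s_n) ∈ {−1,0,1}^n be a sign vector with s ≠ (0, …, 0). If there exists ξ ∈ ℝ that is a Thom root of f with code s at level n, then f has positive degree (0 < natDegree f), and there exists a unique ξ ∈ ℝ that is a Thom root of f with code s at level n. -/
open Polynomial Filter Set Topology

def IsThomRoot (n : ℕ) (f : Polynomial ℝ) (s : Fin n → ℝ) (ξ : ℝ) : Prop :=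
  f.eval ξ = 0 ∧
    ∀ i : Fin n, Real.sign ((Polynomial.derivative^[(i : ℕ) + 1] f).eval ξ) = s i

lemma realSign_mono : Monotone Real.sign := by
  intro a b hab
  rcases lt_trichotomy a 0 with ha | ha | ha
  · rw [Real.sign_of_neg ha]
    rcases lt_trichotomy b 0 with hb | hb | hb
    · rw [Real.sign_of_neg hb]
    · rw [hb, Real.sign_zero]; norm_num
    · rw [Real.sign_of_pos hb]; norm_num
  · rw [ha, Real.sign_zero]
    rcases lt_trichotomy b 0 with hb | hb | hb
    · exact absurd (ha ▸ hab) hb.not_ge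
    · rw [hb, Real.sign_zero]
    · rw [Real.sign_of_pos hb]; norm_num
  · rw [Real.sign_of_pos ha, Real.sign_of_pos (ha.trans_le hab)]

lemma pos_of_realSign_eq_one {v : ℝ} (h : Real.sign v = 1) : 0 < v := by
  rcases lt_trichotomy v 0 with hv | hv | hv
  · rw [Real.sign_of_neg hv] at h; norm_num at h
  · rw [hv, Real.sign_zero] at h; norm_num at h
  · exact hv

lemma neg_of_realSign_eq_neg_one {v : ℝ} (h : Real.sign v = -1) : v < 0 := by
  rcases lt_trichotomy v 0 with hv | hv | hv
  · exact hv
  · rw [hv, Real.sign_zero] at h; norm_num at h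
  · rw [Real.sign_of_pos hv] at h; norm_num at h

lemma thom_convex : ∀ (n : ℕ) (f : Polynomial ℝ), f.natDegree ≤ n → ∀ (s : Fin n → ℝ)
    (x y z : ℝ), x ≤ y → y ≤ z →
    (∀ i : Fin n, Real.sign ((derivative^[(i : ℕ) + 1] f).eval x) = s i) →
    (∀ i : Fin n, Real.sign ((derivative^[(i : ℕ) + 1] f).eval z) = s i) →
    ∀ i : Fin n, Real.sign ((derivative^[(i : ℕ) + 1] f).eval y) = s i := by
  intro n
  induction n with
  | zero => intro _ _ _ _ _ _ _ _ _ _ i; exact i.elim0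
  | succ n ih =>
    intro f hf s x y z hxy hyz hx hz i
    have hgdeg : (derivative f).natDegree ≤ n := by
      have := f.natDegree_derivative_le
      omega
    have hx' : ∀ j : Fin n, Real.sign ((derivative^[(j : ℕ) + 1] (derivative f)).eval x)
        = s j.succ := by
      intro j
      have := hx j.succ
      rwa [Fin.val_succ, Function.iterate_succ_apply] at this
    have hz' : ∀ j : Fin n, Real.sign ((derivative^[(j : ℕ) + 1] (derivative f)).eval z)
        = s j.succ := by
      intro j
      have := hz j.succ
      rwa [Fin.val_succ, Function.iterate_succ_apply] at this
    have ihg : ∀ t, x ≤ t → t ≤ z →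
        ∀ j : Fin n, Real.sign ((derivative^[(j : ℕ) + 1] (derivative f)).eval t) = s j.succ :=
      fun t h1 h2 => ih (derivative f) hgdeg _ x t z h1 h2 hx' hz'
    rcases Fin.eq_zero_or_eq_succ i with hi | ⟨j, hi⟩
    · -- index 0 : need sign of (derivative f).eval y
      subst hi
      have hgx : Real.sign ((derivative f).eval x) = s 0 := by
        have := hx 0; rwa [show ((0 : Fin (n+1)) : ℕ) + 1 = 1 from rfl,
          Function.iterate_one] at this
      have hgz : Real.sign ((derivative f).eval z) = s 0 := by
        have := hz 0; rwa [show ((0 : Fin (n+1)) : ℕ) + 1 = 1 from rfl,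
          Function.iterate_one] at this
      show Real.sign ((derivative^[((0 : Fin (n+1)) : ℕ) + 1] f).eval y) = s 0
      rw [show ((0 : Fin (n+1)) : ℕ) + 1 = 1 from rfl, Function.iterate_one]
      -- sign of second derivative constant on [x,z]
      have hc : ∀ t, x ≤ t → t ≤ z →
          Real.sign ((derivative (derivative f)).eval t)
            = Real.sign ((derivative (derivative f)).eval x) := by
        cases n with
        | zero =>
          intro t _ _
          obtain ⟨a, ha⟩ := Polynomial.natDegree_eq_zero.mp (Nat.le_zero.mp hgdeg)
          rw [← ha, derivative_C]; simp
        | succ m =>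
          intro t h1 h2
          have h1' := ihg t h1 h2 0
          have h2' := ihg x le_rfl (hxy.trans hyz) 0
          rw [show (((0 : Fin (m+1)) : ℕ)) + 1 = 1 from rfl, Function.iterate_one] at h1' h2'
          rw [h1', h2']
      have key : (∀ t ∈ Set.Icc x z, 0 ≤ (derivative (derivative f)).eval t) ∨
          (∀ t ∈ Set.Icc x z, (derivative (derivative f)).eval t ≤ 0) := by
        rcases lt_trichotomy ((derivative (derivative f)).eval x) 0 with hv | hv | hv
        · right; intro t ht
          have := hc t ht.1 ht.2
          rw [Real.sign_of_neg hv] at this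
          exact (neg_of_realSign_eq_neg_one this).le
        · left; intro t ht
          have := hc t ht.1 ht.2
          rw [hv, Real.sign_zero] at this
          exact (Real.sign_eq_zero_iff.mp this).ge
        · left; intro t ht
          have := hc t ht.1 ht.2
          rw [Real.sign_of_pos hv] at this
          exact (pos_of_realSign_eq_one this).le
      have hxz : x ≤ z := hxy.trans hyz
      have hmemx : x ∈ Set.Icc x z := ⟨le_rfl, hxz⟩
      have hmemy : y ∈ Set.Icc x z := ⟨hxy, hyz⟩
      have hmemz : z ∈ Set.Icc x z := ⟨hxz, le_rfl⟩
      rcases key with hkey | hkey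
      · have hmono : MonotoneOn (fun t => (derivative f).eval t) (Set.Icc x z) := by
          apply monotoneOn_of_deriv_nonneg (convex_Icc x z)
            ((derivative f).continuousOn) ((derivative f).differentiable.differentiableOn)
          intro t ht
          rw [Polynomial.deriv]
          exact hkey t (interior_subset ht)
        have h1 := hmono hmemx hmemy hxy
        have h2 := hmono hmemy hmemz hyz
        exact le_antisymm (hgz ▸ realSign_mono h2) (hgx ▸ realSign_mono h1)
      · have hmono : AntitoneOn (fun t => (derivative f).eval t) (Set.Icc x z) := by
          apply antitoneOn_of_deriv_nonpos (convex_Icc x z)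
            ((derivative f).continuousOn) ((derivative f).differentiable.differentiableOn)
          intro t ht
          rw [Polynomial.deriv]
          exact hkey t (interior_subset ht)
        have h1 := hmono hmemx hmemy hxy
        have h2 := hmono hmemy hmemz hyz
        exact le_antisymm (hgx ▸ realSign_mono h1) (hgz ▸ realSign_mono h2)
    · subst hi
      have := ihg y hxy hyz j
      simpa [Fin.val_succ, Function.iterate_succ_apply] using this

theorem stmt4 (n : ℕ) (hn : 1 ≤ n) (f : Polynomial ℝ) (hf : f.natDegree ≤ n)
    (s : Fin n → ℝ) (hs : ∀ i, s i = -1 ∨ s i = 0 ∨ s i = 1)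
    (hs0 : s ≠ fun _ => 0)
    (hex : ∃ ξ : ℝ, IsThomRoot n f s ξ) :
    0 < f.natDegree ∧ ∃! ξ : ℝ, IsThomRoot n f s ξ := by
  obtain ⟨ξ, hξ⟩ := hex
  have hdeg : 0 < f.natDegree := by
    by_contra h
    push_neg at h
    obtain ⟨a, ha⟩ := Polynomial.natDegree_eq_zero.mp (Nat.le_zero.mp h)
    have hd0 : derivative f = 0 := by rw [← ha, derivative_C]
    apply hs0
    funext i
    have hiter : derivative^[(i : ℕ) + 1] f = 0 := by
      rw [Function.iterate_succ_apply, hd0, Function.iterate_fixed derivative_zero]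
    have := hξ.2 i
    rw [hiter] at this
    simpa using this.symm
  refine ⟨hdeg, ξ, hξ, ?_⟩
  have huniq : ∀ a b : ℝ, a ≤ b → IsThomRoot n f s a → IsThomRoot n f s b → a = b := by
    intro a b hab ha hb
    rcases eq_or_lt_of_le hab with h | h
    · exact h
    exfalso
    let i0 : Fin n := ⟨0, hn⟩
    have hsign : ∀ t, a ≤ t → t ≤ b → Real.sign ((derivative f).eval t) = s i0 := by
      intro t h1 h2
      have := thom_convex n f hf s a t b h1 h2 ha.2 hb.2 i0
      rwa [show ((i0 : ℕ)) + 1 = 1 from rfl, Function.iterate_one] at this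
    rcases hs i0 with hc | hc | hc
    · -- strictly decreasing
      have hanti : StrictAntiOn (fun t => f.eval t) (Set.Icc a b) := by
        apply strictAntiOn_of_deriv_neg (convex_Icc a b) f.continuousOn
        intro t ht
        rw [Polynomial.deriv]
        have ht' := interior_subset ht
        exact neg_of_realSign_eq_neg_one ((hsign t ht'.1 ht'.2).trans hc)
      have := hanti ⟨le_rfl, hab⟩ ⟨hab, le_rfl⟩ h
      simp only [ha.1, hb.1] at this
      exact lt_irrefl _ this
    · -- derivative zero on [a,b] ⇒ f constant, contradiction with hdeg
      have hzero : ∀ t ∈ Set.Icc a b, (derivative f).eval t = 0 := by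
        intro t ht
        exact Real.sign_eq_zero_iff.mp ((hsign t ht.1 ht.2).trans hc)
      have hdz : derivative f = 0 := by
        apply Polynomial.eq_zero_of_infinite_isRoot
        apply Set.Infinite.mono _ (Set.Icc_infinite h)
        intro t ht
        exact hzero t ht
      have := Polynomial.natDegree_eq_zero_of_derivative_eq_zero hdz
      omega
    · -- strictly increasing
      have hmono : StrictMonoOn (fun t => f.eval t) (Set.Icc a b) := by
        apply strictMonoOn_of_deriv_pos (convex_Icc a b) f.continuousOn
        intro t ht
        rw [Polynomial.deriv]
        have ht' := interior_subset ht
        exact pos_of_realSign_eq_one ((hsign t ht'.1 ht'.2).trans hc)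
      have := hmono ⟨le_rfl, hab⟩ ⟨hab, le_rfl⟩ h
      simp only [ha.1, hb.1] at this
      exact lt_irrefl _ this
  intro y hy
  rcases le_total y ξ with h | h
  · exact huniq y ξ h hy hξ
  · exact (huniq ξ y h hξ hy).symm
end

section
/- Let n ≥ 1 and let f, g ∈ ℝ[X] with natDegree f ≤ n and natDegree g ≤ n. Let s = (s_1, …, s_n) ∈ {−1,0,1}^n with s ≠ (0, …, 0), and suppose ξ is a Thom root of f with code s at level n and ζ is a Thom root of g with code s at level n. Then there exists σ ∈ {−1, 1} such that ∀ᶠ t in 𝓝[<] ξ, sgn(f(t)) = σ, and ∀ᶠ t in 𝓝[<] ζ, sgn(g(t)) = σ. -/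
open Polynomial Filter Set Topology

lemma realSign_mul (a b : ℝ) : Real.sign (a * b) = Real.sign a * Real.sign b := by
  rcases lt_trichotomy a 0 with ha | ha | ha
  · rcases lt_trichotomy b 0 with hb | hb | hb
    · rw [Real.sign_of_pos (mul_pos_of_neg_of_neg ha hb), Real.sign_of_neg ha,
        Real.sign_of_neg hb]; ring
    · simp [hb, Real.sign_zero]
    · rw [Real.sign_of_neg (mul_neg_of_neg_of_pos ha hb), Real.sign_of_neg ha,
        Real.sign_of_pos hb]; ring
  · simp [ha, Real.sign_zero]
  · rcases lt_trichotomy b 0 with hb | hb | hb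
    · rw [Real.sign_of_neg (mul_neg_of_pos_of_neg ha hb), Real.sign_of_pos ha,
        Real.sign_of_neg hb]; ring
    · simp [hb, Real.sign_zero]
    · rw [Real.sign_of_pos (mul_pos ha hb), Real.sign_of_pos ha,
        Real.sign_of_pos hb]; ring

lemma realSign_pow (a : ℝ) (m : ℕ) : Real.sign (a ^ m) = Real.sign a ^ m := by
  induction m with
  | zero => simp [Real.sign_one]
  | succ m ih => rw [pow_succ, pow_succ, realSign_mul, ih]

/-- Key lemma: if all derivatives of order `≤ k` vanish at `ξ` and the `(k+1)`-st
does not, then the sign of `f` just to the left of `ξ` is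
`sign (f^{(k+1)} ξ) * (-1)^(k+1)`. -/
lemma left_sign (f : Polynomial ℝ) (ξ : ℝ) (k : ℕ)
    (hz : ∀ m ≤ k, (Polynomial.derivative^[m] f).eval ξ = 0)
    (hd : (Polynomial.derivative^[k + 1] f).eval ξ ≠ 0) :
    ∀ᶠ t in 𝓝[<] ξ,
      Real.sign (f.eval t)
        = Real.sign ((Polynomial.derivative^[k + 1] f).eval ξ) * (-1) ^ (k + 1) := by
  have hf0 : f ≠ 0 := by
    rintro rfl
    simp at hd
  have hlt : k < f.rootMultiplicity ξ := by
    apply Polynomial.lt_rootMultiplicity_of_isRoot_iterate_derivative_of_mem_nonZeroDivisors' hf0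
    · exact fun m hm => hz m hm
    · intro m _ hm
      exact mem_nonZeroDivisors_of_ne_zero (by exact_mod_cast hm)
  have hle : f.rootMultiplicity ξ ≤ k + 1 := by
    by_contra h
    push_neg at h
    exact hd (Polynomial.isRoot_iterate_derivative_of_lt_rootMultiplicity h)
  have hm : f.rootMultiplicity ξ = k + 1 := le_antisymm hle hlt
  set q := f /ₘ (X - C ξ) ^ (k + 1) with hqdef
  have hq : (X - C ξ) ^ (k + 1) * q = f := by
    rw [hqdef, ← hm]
    exact Polynomial.pow_mul_divByMonic_rootMultiplicity_eq f ξ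
  have hqξ : q.eval ξ ≠ 0 := by
    have := Polynomial.eval_divByMonic_pow_rootMultiplicity_ne_zero (p := f) ξ hf0
    rwa [hm] at this
  have hsgn : Real.sign ((Polynomial.derivative^[k + 1] f).eval ξ) = Real.sign (q.eval ξ) := by
    have := Polynomial.eval_iterate_derivative_rootMultiplicity (p := f) (t := ξ)
    rw [hm] at this
    rw [this, nsmul_eq_mul, realSign_mul,
      Real.sign_of_pos (by positivity : (0:ℝ) < ((k+1).factorial : ℝ)), one_mul]
  -- eventually q has constant sign near ξ
  have hq_ev : ∀ᶠ t in 𝓝 ξ, Real.sign (q.eval t) = Real.sign (q.eval ξ) := by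
    rcases hqξ.lt_or_gt with h | h
    · filter_upwards [(isOpen_lt q.continuous continuous_const).mem_nhds h] with t ht
      rw [Real.sign_of_neg ht, Real.sign_of_neg h]
    · filter_upwards [(isOpen_lt continuous_const q.continuous).mem_nhds h] with t ht
      rw [Real.sign_of_pos ht, Real.sign_of_pos h]
  filter_upwards [self_mem_nhdsWithin, mem_nhdsWithin_of_mem_nhds hq_ev] with t ht hqt
  have : f.eval t = (t - ξ) ^ (k + 1) * q.eval t := by
    rw [← hq]; simp
  rw [this, realSign_mul, realSign_pow, Real.sign_of_neg (sub_neg.mpr ht), hqt, hsgn, mul_comm]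

theorem stmt6 (n : ℕ) (hn : 1 ≤ n) (f g : Polynomial ℝ)
    (hf : f.natDegree ≤ n) (hg : g.natDegree ≤ n)
    (s : Fin n → ℝ) (hs : ∀ i, s i = -1 ∨ s i = 0 ∨ s i = 1)
    (hs0 : s ≠ fun _ => 0)
    (ξ ζ : ℝ) (hξ : IsThomRoot n f s ξ) (hζ : IsThomRoot n g s ζ) :
    ∃ σ : ℝ, (σ = -1 ∨ σ = 1) ∧
      (∀ᶠ t in 𝓝[<] ξ, Real.sign (f.eval t) = σ) ∧
      (∀ᶠ t in 𝓝[<] ζ, Real.sign (g.eval t) = σ) := by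
  have hex : ∃ m : ℕ, ∃ hm : m < n, s ⟨m, hm⟩ ≠ 0 := by
    by_contra h
    push_neg at h
    exact hs0 (funext fun i => h i i.isLt)
  classical
  obtain ⟨hk, hks⟩ := Nat.find_spec hex
  have hmin : ∀ j (hj : j < n), j < Nat.find hex → s ⟨j, hj⟩ = 0 := by
    intro j hj hjk
    by_contra h
    exact absurd (Nat.find_le ⟨hj, h⟩) (not_le.mpr hjk)
  set K := Nat.find hex with hK
  -- derivatives up to order K vanish for f and g
  have hzf : ∀ m ≤ K, (Polynomial.derivative^[m] f).eval ξ = 0 := by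
    intro m hm
    rcases Nat.eq_zero_or_pos m with rfl | hpos
    · simpa using hξ.1
    · obtain ⟨j, rfl⟩ := Nat.exists_eq_succ_of_ne_zero hpos.ne'
      have hj : j < n := lt_of_lt_of_le (Nat.lt_of_succ_le hm) (le_of_lt hk)
      have := hξ.2 ⟨j, hj⟩
      rw [hmin j hj (Nat.lt_of_succ_le hm)] at this
      exact Real.sign_eq_zero_iff.mp this
  have hzg : ∀ m ≤ K, (Polynomial.derivative^[m] g).eval ζ = 0 := by
    intro m hm
    rcases Nat.eq_zero_or_pos m with rfl | hpos
    · simpa using hζ.1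
    · obtain ⟨j, rfl⟩ := Nat.exists_eq_succ_of_ne_zero hpos.ne'
      have hj : j < n := lt_of_lt_of_le (Nat.lt_of_succ_le hm) (le_of_lt hk)
      have := hζ.2 ⟨j, hj⟩
      rw [hmin j hj (Nat.lt_of_succ_le hm)] at this
      exact Real.sign_eq_zero_iff.mp this
  have hsf : Real.sign ((Polynomial.derivative^[K + 1] f).eval ξ) = s ⟨K, hk⟩ := hξ.2 ⟨K, hk⟩
  have hsg : Real.sign ((Polynomial.derivative^[K + 1] g).eval ζ) = s ⟨K, hk⟩ := hζ.2 ⟨K, hk⟩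
  have hdf : (Polynomial.derivative^[K + 1] f).eval ξ ≠ 0 := by
    intro h
    apply hks
    rw [← hsf, h, Real.sign_zero]
  have hdg : (Polynomial.derivative^[K + 1] g).eval ζ ≠ 0 := by
    intro h
    apply hks
    rw [← hsg, h, Real.sign_zero]
  refine ⟨s ⟨K, hk⟩ * (-1) ^ (K + 1), ?_, ?_, ?_⟩
  · rcases hs ⟨K, hk⟩ with h | h | h
    · rcases Nat.even_or_odd (K + 1) with he | ho
      · rw [h, he.neg_one_pow]; left; ring
      · rw [h, ho.neg_one_pow]; right; ring
    · exact absurd h hks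
    · rcases Nat.even_or_odd (K + 1) with he | ho
      · rw [h, he.neg_one_pow]; right; ring
      · rw [h, ho.neg_one_pow]; left; ring
  · filter_upwards [left_sign f ξ K hzf hdf] with t ht
    rw [ht, hsf]
  · filter_upwards [left_sign g ζ K hzg hdg] with t ht
    rw [ht, hsg]
end

section
/- Let n ≥ 1 and let f, g ∈ ℝ[X] with natDegree f ≤ n and natDegree g ≤ n. Let s = (s_1, …, s_n) ∈ {−1,0,1}^n with s ≠ (0, …, 0), and suppose ξ is a Thom root of f with code s at level n and ζ is a Thom root of g with code s at level n. Then there exists σ ∈ {−1, 1} such that ∀ᶠ t in 𝓝[>] ξ, sgn(f(t)) = σ, and ∀ᶠ t in 𝓝[>] ζ, sgn(g(t)) = σ. -/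
open Polynomial Filter Set Topology

lemma lemA (f : Polynomial ℝ) (ξ : ℝ) (h0 : f.eval ξ = 0)
    (h1 : ∀ᶠ t in 𝓝[>] ξ, 0 < f.derivative.eval t) :
    ∀ᶠ t in 𝓝[>] ξ, 0 < f.eval t := by
  rw [(nhdsGT_basis ξ).eventually_iff] at h1 ⊢
  obtain ⟨b, hb, hbs⟩ := h1
  refine ⟨b, hb, fun t ht => ?_⟩
  have hmono : StrictMonoOn (fun x => f.eval x) (Icc ξ b) := by
    apply strictMonoOn_of_deriv_pos (convex_Icc _ _) (f.continuous.continuousOn)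
    intro x hx
    rw [interior_Icc] at hx
    rw [Polynomial.deriv]
    exact hbs hx
  have := hmono (left_mem_Icc.2 (le_of_lt hb)) ⟨le_of_lt ht.1, le_of_lt ht.2⟩ ht.1
  simpa [h0] using this

lemma lemB (k : ℕ) (f : Polynomial ℝ) (ξ : ℝ)
    (h0 : ∀ j ≤ k, (Polynomial.derivative^[j] f).eval ξ = 0)
    (hpos : 0 < (Polynomial.derivative^[k+1] f).eval ξ) :
    ∀ᶠ t in 𝓝[>] ξ, 0 < f.eval t := by
  induction k generalizing f with
  | zero =>
    apply lemA f ξ (by simpa using h0 0 le_rfl)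
    have hc : Continuous fun t => f.derivative.eval t := f.derivative.continuous
    have : ∀ᶠ t in 𝓝 ξ, 0 < f.derivative.eval t :=
      (isOpen_lt continuous_const hc).eventually_mem (by simpa using hpos)
    exact this.filter_mono nhdsWithin_le_nhds
  | succ k ih =>
    apply lemA f ξ (by simpa using h0 0 (Nat.zero_le _))
    apply ih f.derivative
    · intro j hj
      rw [← Function.iterate_succ_apply]
      exact h0 (j+1) (Nat.succ_le_succ hj)
    · rw [← Function.iterate_succ_apply]
      exact hpos

lemma lemC (k : ℕ) (f : Polynomial ℝ) (ξ : ℝ)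
    (h0 : ∀ j ≤ k, (Polynomial.derivative^[j] f).eval ξ = 0)
    (hneg : (Polynomial.derivative^[k+1] f).eval ξ < 0) :
    ∀ᶠ t in 𝓝[>] ξ, f.eval t < 0 := by
  have := lemB k (-f) ξ (fun j hj => by
      rw [Polynomial.iterate_derivative_neg, eval_neg, h0 j hj, neg_zero])
    (by rw [Polynomial.iterate_derivative_neg, eval_neg]; linarith)
  filter_upwards [this] with t ht
  rw [eval_neg] at ht; linarith

lemma lemD (k : ℕ) (f : Polynomial ℝ) (ξ : ℝ) (c : ℝ) (hc : c = -1 ∨ c = 1)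
    (h0 : ∀ j ≤ k, (Polynomial.derivative^[j] f).eval ξ = 0)
    (hsgn : Real.sign ((Polynomial.derivative^[k+1] f).eval ξ) = c) :
    ∀ᶠ t in 𝓝[>] ξ, Real.sign (f.eval t) = c := by
  rcases hc with hc | hc
  · subst hc
    have hneg : (Polynomial.derivative^[k+1] f).eval ξ < 0 := by
      rcases lt_trichotomy ((Polynomial.derivative^[k+1] f).eval ξ) 0 with h | h | h
      · exact h
      · rw [h, Real.sign_zero] at hsgn; norm_num at hsgn
      · rw [Real.sign_of_pos h] at hsgn; norm_num at hsgn
    filter_upwards [lemC k f ξ h0 hneg] with t ht using Real.sign_of_neg ht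
  · subst hc
    have hpos : 0 < (Polynomial.derivative^[k+1] f).eval ξ := by
      rcases lt_trichotomy ((Polynomial.derivative^[k+1] f).eval ξ) 0 with h | h | h
      · rw [Real.sign_of_neg h] at hsgn; norm_num at hsgn
      · rw [h, Real.sign_zero] at hsgn; norm_num at hsgn
      · exact h
    filter_upwards [lemB k f ξ h0 hpos] with t ht using Real.sign_of_pos ht

theorem stmt7 (n : ℕ) (hn : 1 ≤ n) (f g : Polynomial ℝ)
    (hf : f.natDegree ≤ n) (hg : g.natDegree ≤ n)
    (s : Fin n → ℝ) (hs : ∀ i, s i = -1 ∨ s i = 0 ∨ s i = 1)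
    (hs0 : s ≠ fun _ => 0)
    (ξ ζ : ℝ) (hξ : IsThomRoot n f s ξ) (hζ : IsThomRoot n g s ζ) :
    ∃ σ : ℝ, (σ = -1 ∨ σ = 1) ∧
      (∀ᶠ t in 𝓝[>] ξ, Real.sign (f.eval t) = σ) ∧
      (∀ᶠ t in 𝓝[>] ζ, Real.sign (g.eval t) = σ) := by
  have hne : (Finset.univ.filter (fun i : Fin n => s i ≠ 0)).Nonempty := by
    by_contra h
    apply hs0
    funext i
    rw [Finset.not_nonempty_iff_eq_empty, Finset.filter_eq_empty_iff] at h
    have := h (Finset.mem_univ i)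
    simpa using this
  set k := (Finset.univ.filter (fun i : Fin n => s i ≠ 0)).min' hne with hk
  have hkne : s k ≠ 0 := by
    have := (Finset.univ.filter (fun i : Fin n => s i ≠ 0)).min'_mem hne
    rw [Finset.mem_filter] at this; exact this.2
  have hklt : ∀ i : Fin n, i < k → s i = 0 := by
    intro i hi
    by_contra h
    exact absurd (Finset.min'_le _ i (Finset.mem_filter.2 ⟨Finset.mem_univ i, h⟩))
      (not_le.2 hi)
  have hkc : s k = -1 ∨ s k = 1 := by
    rcases hs k with h | h | h
    · exact Or.inl h
    · exact absurd h hkne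
    · exact Or.inr h
  have key : ∀ (p : Polynomial ℝ) (x : ℝ), IsThomRoot n p s x →
      ∀ j ≤ (k : ℕ), (Polynomial.derivative^[j] p).eval x = 0 := by
    intro p x hx j hj
    cases j with
    | zero => simpa using hx.1
    | succ m =>
      have hm : m < n := lt_of_lt_of_le (Nat.lt_of_succ_le hj) k.2.le
      have hmk : (⟨m, hm⟩ : Fin n) < k := by
        rw [Fin.lt_def]; exact Nat.lt_of_succ_le hj
      have := hx.2 ⟨m, hm⟩
      rw [hklt _ hmk, Real.sign_eq_zero_iff] at this
      exact this
  refine ⟨s k, hkc, ?_, ?_⟩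
  · exact lemD k f ξ (s k) hkc (key f ξ hξ) (hξ.2 k)
  · exact lemD k g ζ (s k) hkc (key g ζ hζ) (hζ.2 k)
end

section
/- Let n ≥ 1 and let f, g ∈ ℝ[X] with natDegree f ≤ n and natDegree g ≤ n. Let s = (s_1, …, s_n) ∈ {−1,0,1}^n with s ≠ (0, …, 0), and suppose ξ is a Thom root of f with code s at level n and ζ is a Thom root of g with code s at level n. Then for every i ∈ {0, 1, …, n} there exists σ ∈ {−1, 0, 1} such that ∀ᶠ t in 𝓝[<] ξ, sgn(f^{(i)}(t)) = σ, and ∀ᶠ t in 𝓝[<] ζ, sgn(g^{(i)}(t)) = σ. -/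
open Polynomial Filter Set Topology

lemma left_sign_of_ne (p : Polynomial ℝ) (ξ : ℝ) (h0 : p.eval ξ ≠ 0) :
    ∀ᶠ t in 𝓝[<] ξ, Real.sign (p.eval t) = Real.sign (p.eval ξ) := by
  rcases lt_or_gt_of_ne h0 with h | h
  · have hev : ∀ᶠ t in 𝓝 ξ, p.eval t < 0 :=
      (isOpen_lt (p.continuous) continuous_const).mem_nhds h
    filter_upwards [nhdsWithin_le_nhds hev] with t ht
    rw [Real.sign_of_neg ht, Real.sign_of_neg h]
  · have hev : ∀ᶠ t in 𝓝 ξ, 0 < p.eval t :=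
      (isOpen_lt continuous_const (p.continuous)) |>.mem_nhds h
    filter_upwards [nhdsWithin_le_nhds hev] with t ht
    rw [Real.sign_of_pos ht, Real.sign_of_pos h]

lemma left_sign_of_root (p : Polynomial ℝ) (ξ : ℝ) (h0 : p.eval ξ = 0) (σ : ℝ)
    (hσ3 : σ = -1 ∨ σ = 0 ∨ σ = 1)
    (hσ : ∀ᶠ t in 𝓝[<] ξ, Real.sign ((derivative p).eval t) = σ) :
    ∀ᶠ t in 𝓝[<] ξ, Real.sign (p.eval t) = -σ := by
  obtain ⟨l, hl, hsub⟩ := mem_nhdsLT_iff_exists_Ioo_subset.mp hσ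
  rcases hσ3 with rfl | rfl | rfl
  · -- derivative negative on Ioo l ξ, p strictly anti on Icc l ξ... restrict to Icc l' ξ
    have hneg : ∀ t ∈ Ioo l ξ, (derivative p).eval t < 0 := by
      intro t ht
      have : Real.sign ((derivative p).eval t) = _ := hsub ht
      by_contra hc
      push_neg at hc
      rcases hc.lt_or_eq with h' | h'
      · rw [Real.sign_of_pos h'] at this; norm_num at this
      · rw [← h', Real.sign_zero] at this; norm_num at this
    obtain ⟨l', hl'1, hl'2⟩ := exists_between (show l < ξ from hl)
    have hanti : StrictAntiOn (fun t => p.eval t) (Icc l' ξ) := by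
      apply strictAntiOn_of_deriv_neg (convex_Icc _ _) (p.continuous.continuousOn)
      intro x hx
      rw [interior_Icc] at hx
      rw [Polynomial.deriv]
      exact hneg x ⟨hl'1.trans hx.1, hx.2⟩
    filter_upwards [Ioo_mem_nhdsLT hl'2] with t ht
    have : p.eval ξ < p.eval t := hanti ⟨ht.1.le, ht.2.le⟩ (right_mem_Icc.mpr hl'2.le) ht.2
    rw [h0] at this
    rw [Real.sign_of_pos this]; norm_num
  · -- derivative zero on Ioo l ξ ⇒ derivative p = 0 ⇒ p = 0
    have hz : ∀ t ∈ Ioo l ξ, (derivative p).eval t = 0 := fun t ht =>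
      Real.sign_eq_zero_iff.mp (hsub ht)
    have hd0 : derivative p = 0 := by
      apply eq_zero_of_infinite_isRoot
      exact (Set.Ioo_infinite hl).mono hz
    have : p.natDegree = 0 := natDegree_eq_zero_of_derivative_eq_zero hd0
    obtain ⟨c, rfl⟩ := Polynomial.natDegree_eq_zero.mp this
    simp only [eval_C] at h0 ⊢
    subst h0
    simp [Real.sign_zero]
  · have hpos : ∀ t ∈ Ioo l ξ, 0 < (derivative p).eval t := by
      intro t ht
      have : Real.sign ((derivative p).eval t) = _ := hsub ht
      by_contra hc
      push_neg at hc
      rcases hc.lt_or_eq with h' | h'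
      · rw [Real.sign_of_neg h'] at this; norm_num at this
      · rw [h', Real.sign_zero] at this; norm_num at this
    obtain ⟨l', hl'1, hl'2⟩ := exists_between (show l < ξ from hl)
    have hmono : StrictMonoOn (fun t => p.eval t) (Icc l' ξ) := by
      apply strictMonoOn_of_deriv_pos (convex_Icc _ _) (p.continuous.continuousOn)
      intro x hx
      rw [interior_Icc] at hx
      rw [Polynomial.deriv]
      exact hpos x ⟨hl'1.trans hx.1, hx.2⟩
    filter_upwards [Ioo_mem_nhdsLT hl'2] with t ht
    have : p.eval t < p.eval ξ := hmono ⟨ht.1.le, ht.2.le⟩ (right_mem_Icc.mpr hl'2.le) ht.2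
    rw [h0] at this
    rw [Real.sign_of_neg this]

theorem stmt8 (n : ℕ) (hn : 1 ≤ n) (f g : Polynomial ℝ)
    (hf : f.natDegree ≤ n) (hg : g.natDegree ≤ n)
    (s : Fin n → ℝ) (hs : ∀ i, s i = -1 ∨ s i = 0 ∨ s i = 1)
    (hs0 : s ≠ fun _ => 0)
    (ξ ζ : ℝ) (hξ : IsThomRoot n f s ξ) (hζ : IsThomRoot n g s ζ) :
    ∀ i : ℕ, i ≤ n → ∃ σ : ℝ, (σ = -1 ∨ σ = 0 ∨ σ = 1) ∧
      (∀ᶠ t in 𝓝[<] ξ, Real.sign ((Polynomial.derivative^[i] f).eval t) = σ) ∧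
      (∀ᶠ t in 𝓝[<] ζ, Real.sign ((Polynomial.derivative^[i] g).eval t) = σ) := by
  set P : ℕ → Prop := fun j => ∃ σ : ℝ, (σ = -1 ∨ σ = 0 ∨ σ = 1) ∧
      (∀ᶠ t in 𝓝[<] ξ, Real.sign ((Polynomial.derivative^[j] f).eval t) = σ) ∧
      (∀ᶠ t in 𝓝[<] ζ, Real.sign ((Polynomial.derivative^[j] g).eval t) = σ) with hP
  suffices h : ∀ i ≤ n, P i by exact h
  -- helper for constant top derivative
  have const_eval : ∀ p : Polynomial ℝ, p.natDegree ≤ n →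
      ∀ t : ℝ, (Polynomial.derivative^[n] p).eval t = (Polynomial.derivative^[n] p).eval ξ := by
    intro p hp t
    have h1 : (Polynomial.derivative^[n] p).natDegree = 0 := by
      have := Polynomial.natDegree_iterate_derivative p n
      omega
    obtain ⟨c, hc⟩ := Polynomial.natDegree_eq_zero.mp h1
    rw [← hc]; simp
  obtain ⟨iN, hiN⟩ : ∃ i : Fin n, (i : ℕ) = n - 1 := ⟨⟨n - 1, by omega⟩, rfl⟩
  -- base case
  have base : P n := by
    refine ⟨s iN, hs iN, ?_, ?_⟩
    · apply Filter.Eventually.of_forall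
      intro t
      have h1 : (Polynomial.derivative^[n] f).natDegree = 0 := by
        have := Polynomial.natDegree_iterate_derivative f n
        omega
      obtain ⟨c, hc⟩ := Polynomial.natDegree_eq_zero.mp h1
      have hξ2 := hξ.2 iN
      rw [show ((iN : ℕ) + 1) = n by rw [hiN]; omega] at hξ2
      rw [← hc] at hξ2 ⊢
      simpa using hξ2
    · apply Filter.Eventually.of_forall
      intro t
      have h1 : (Polynomial.derivative^[n] g).natDegree = 0 := by
        have := Polynomial.natDegree_iterate_derivative g n
        omega
      obtain ⟨c, hc⟩ := Polynomial.natDegree_eq_zero.mp h1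
      have hζ2 := hζ.2 iN
      rw [show ((iN : ℕ) + 1) = n by rw [hiN]; omega] at hζ2
      rw [← hc] at hζ2 ⊢
      simpa using hζ2
  -- downward step
  have step : ∀ j, j < n → P (j + 1) → P j := by
    intro j hjn ⟨σ', hσ'3, hσ'f, hσ'g⟩
    have hf' : ∀ᶠ t in 𝓝[<] ξ,
        Real.sign ((Polynomial.derivative (Polynomial.derivative^[j] f)).eval t) = σ' := by
      simpa [Function.iterate_succ_apply'] using hσ'f
    have hg' : ∀ᶠ t in 𝓝[<] ζ,
        Real.sign ((Polynomial.derivative (Polynomial.derivative^[j] g)).eval t) = σ' := by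
      simpa [Function.iterate_succ_apply'] using hσ'g
    rcases Nat.eq_zero_or_pos j with rfl | hj1
    · refine ⟨-σ', by rcases hσ'3 with rfl | rfl | rfl <;> norm_num, ?_, ?_⟩
      · simpa using left_sign_of_root f ξ hξ.1 σ' hσ'3 (by simpa using hf')
      · simpa using left_sign_of_root g ζ hζ.1 σ' hσ'3 (by simpa using hg')
    · set i : Fin n := ⟨j - 1, by omega⟩ with hi
      have hξ2 : Real.sign ((Polynomial.derivative^[j] f).eval ξ) = s i := by
        have := hξ.2 i
        rwa [show ((i : ℕ) + 1) = j by simp [hi]; omega] at this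
      have hζ2 : Real.sign ((Polynomial.derivative^[j] g).eval ζ) = s i := by
        have := hζ.2 i
        rwa [show ((i : ℕ) + 1) = j by simp [hi]; omega] at this
      by_cases hsi : s i = 0
      · have hfz : (Polynomial.derivative^[j] f).eval ξ = 0 :=
          Real.sign_eq_zero_iff.mp (by rw [hξ2, hsi])
        have hgz : (Polynomial.derivative^[j] g).eval ζ = 0 :=
          Real.sign_eq_zero_iff.mp (by rw [hζ2, hsi])
        exact ⟨-σ', by rcases hσ'3 with rfl | rfl | rfl <;> norm_num,
          left_sign_of_root _ ξ hfz σ' hσ'3 hf',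
          left_sign_of_root _ ζ hgz σ' hσ'3 hg'⟩
      · have hfne : (Polynomial.derivative^[j] f).eval ξ ≠ 0 := by
          intro h; apply hsi; rw [← hξ2, h, Real.sign_zero]
        have hgne : (Polynomial.derivative^[j] g).eval ζ ≠ 0 := by
          intro h; apply hsi; rw [← hζ2, h, Real.sign_zero]
        refine ⟨s i, hs i, ?_, ?_⟩
        · filter_upwards [left_sign_of_ne _ ξ hfne] with t ht
          rw [ht, hξ2]
        · filter_upwards [left_sign_of_ne _ ζ hgne] with t ht
          rw [ht, hζ2]
  -- downward induction
  have key : ∀ k j, j ≤ n → n - j ≤ k → P j := by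
    intro k
    induction k with
    | zero =>
      intro j hj hk
      exact (show j = n by omega) ▸ base
    | succ k ih =>
      intro j hj hk
      rcases eq_or_lt_of_le hj with rfl | hlt
      · exact base
      · exact step j hlt (ih (j + 1) hlt (by omega))
  intro i hi
  exact key (n - i) i hi le_rfl
end

section
/- Let f ∈ ℝ[X], let ξ ∈ ℝ with f(ξ) = 0, and let l, r ∈ ℝ with l < ξ < r. Suppose f(t) ≠ 0 for all t ∈ [l, ξ) and f(t) ≠ 0 for all t ∈ (ξ, r]. Then for all t ∈ [l, ξ), sgn(f(t)) = sgn(f(l)), and for all t ∈ (ξ, r], sgn(f(t)) = sgn(f(r)); in particular, ∀ᶠ t in 𝓝[<] ξ, sgn(f(t)) = sgn(f(l)), and ∀ᶠ t in 𝓝[>] ξ, sgn(f(t)) = sgn(f(r)). -/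
open Polynomial Filter Set Topology

lemma sign_const_aux (f : Polynomial ℝ) {a b : ℝ} (hab : a ≤ b)
    (h : ∀ t ∈ Set.Icc a b, f.eval t ≠ 0) :
    Real.sign (f.eval a) = Real.sign (f.eval b) := by
  have hc : ContinuousOn (fun x => f.eval x) (Set.Icc a b) :=
    (f.continuous_aeval).continuousOn
  have ha := h a ⟨le_refl a, hab⟩
  have hb := h b ⟨hab, le_refl b⟩
  rcases lt_or_gt_of_ne ha with ha' | ha' <;> rcases lt_or_gt_of_ne hb with hb' | hb'
  · rw [Real.sign_of_neg ha', Real.sign_of_neg hb']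
  · obtain ⟨c, hc1, hc2⟩ := intermediate_value_Icc hab hc
      (⟨ha'.le, hb'.le⟩ : (0:ℝ) ∈ Set.Icc (f.eval a) (f.eval b))
    exact absurd hc2 (h c hc1)
  · obtain ⟨c, hc1, hc2⟩ := intermediate_value_Icc' hab hc
      (⟨hb'.le, ha'.le⟩ : (0:ℝ) ∈ Set.Icc (f.eval b) (f.eval a))
    exact absurd hc2 (h c hc1)
  · rw [Real.sign_of_pos ha', Real.sign_of_pos hb']

theorem stmt9 (f : Polynomial ℝ) (ξ l r : ℝ) (hξ : f.eval ξ = 0)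
    (hl : l < ξ) (hr : ξ < r)
    (h1 : ∀ t ∈ Set.Ico l ξ, f.eval t ≠ 0)
    (h2 : ∀ t ∈ Set.Ioc ξ r, f.eval t ≠ 0) :
    (∀ t ∈ Set.Ico l ξ, Real.sign (f.eval t) = Real.sign (f.eval l)) ∧
    (∀ t ∈ Set.Ioc ξ r, Real.sign (f.eval t) = Real.sign (f.eval r)) ∧
    (∀ᶠ t in 𝓝[<] ξ, Real.sign (f.eval t) = Real.sign (f.eval l)) ∧
    (∀ᶠ t in 𝓝[>] ξ, Real.sign (f.eval t) = Real.sign (f.eval r)) := by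
  have H1 : ∀ t ∈ Set.Ico l ξ, Real.sign (f.eval t) = Real.sign (f.eval l) := by
    intro t ⟨ht1, ht2⟩
    exact (sign_const_aux f ht1 (fun s ⟨hs1, hs2⟩ => h1 s ⟨hs1, lt_of_le_of_lt hs2 ht2⟩)).symm
  have H2 : ∀ t ∈ Set.Ioc ξ r, Real.sign (f.eval t) = Real.sign (f.eval r) := by
    intro t ⟨ht1, ht2⟩
    exact sign_const_aux f ht2 (fun s ⟨hs1, hs2⟩ => h2 s ⟨lt_of_lt_of_le ht1 hs1, hs2⟩)
  refine ⟨H1, H2, ?_, ?_⟩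
  · filter_upwards [Ioo_mem_nhdsLT_of_mem ⟨hl, le_refl ξ⟩] with t ht
    exact H1 t ⟨ht.1.le, ht.2⟩
  · filter_upwards [Ioo_mem_nhdsGT_of_mem ⟨le_refl ξ, hr⟩] with t ht
    exact H2 t ⟨ht.1, ht.2.le⟩
end

section
/- Let n ∈ ℕ and let q ∈ ℝ[X] with natDegree q ≤ n, with coefficients b_j = coeff q j. Then: (a) (∀ᶠ x in atBot, q(x) < 0) if and only if there exists k ∈ {0, …, n} such that b_j = 0 for all j with k < j ≤ n and (−1)^k · b_k < 0; and (b) (∀ᶠ x in atBot, q(x) > 0) if and only if there exists k ∈ {0, …, n} such that b_j = 0 for all j with k < j ≤ n and (−1)^k · b_k > 0. -/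
open Polynomial Filter Set Topology

private lemma evTop_neg (p : Polynomial ℝ) (hp : p.leadingCoeff < 0) :
    ∀ᶠ x in Filter.atTop, p.eval x < 0 := by
  rcases le_or_gt p.degree 0 with h | h
  · have h0 : p.natDegree = 0 := Nat.le_zero.mp (Polynomial.natDegree_le_iff_degree_le.mpr (by exact_mod_cast h))
    have hc : p.coeff 0 < 0 := by rwa [Polynomial.leadingCoeff, h0] at hp
    filter_upwards with x
    rw [Polynomial.eq_C_of_degree_le_zero h, eval_C]
    exact hc
  · have H := Polynomial.tendsto_atBot_of_leadingCoeff_nonpos p h hp.le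
    have := (tendsto_atBot.mp H) (-1)
    filter_upwards [this] with x hx; linarith

private lemma evTop_pos (p : Polynomial ℝ) (hp : 0 < p.leadingCoeff) :
    ∀ᶠ x in Filter.atTop, 0 < p.eval x := by
  have := evTop_neg (-p) (by rw [leadingCoeff_neg]; linarith)
  filter_upwards [this] with x hx
  rw [eval_neg] at hx; linarith

private lemma evTop_neg_iff (p : Polynomial ℝ) (hp : p ≠ 0) :
    (∀ᶠ x in Filter.atTop, p.eval x < 0) ↔ p.leadingCoeff < 0 := by
  constructor
  · intro h
    rcases lt_trichotomy p.leadingCoeff 0 with h' | h' | h'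
    · exact h'
    · exact absurd h' (leadingCoeff_ne_zero.mpr hp)
    · obtain ⟨x, h1, h2⟩ := (h.and (evTop_pos p h')).exists
      linarith
  · exact evTop_neg p

private lemma evTop_pos_iff (p : Polynomial ℝ) (hp : p ≠ 0) :
    (∀ᶠ x in Filter.atTop, 0 < p.eval x) ↔ 0 < p.leadingCoeff := by
  have := evTop_neg_iff (-p) (neg_ne_zero.mpr hp)
  simp only [eval_neg, leadingCoeff_neg, neg_lt, neg_neg] at this
  simpa [neg_lt_zero] using this

private lemma evBot_iff (p : Polynomial ℝ) (hp : p ≠ 0) :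
    ((∀ᶠ x in Filter.atBot, p.eval x < 0) ↔
        (-1 : ℝ) ^ p.natDegree * p.leadingCoeff < 0) ∧
    ((∀ᶠ x in Filter.atBot, 0 < p.eval x) ↔
        0 < (-1 : ℝ) ^ p.natDegree * p.leadingCoeff) := by
  set s : Polynomial ℝ := p.comp (-X) with hs
  have hnX : (-X : Polynomial ℝ).natDegree = 1 := by
    rw [natDegree_neg, natDegree_X]
  have hlead : s.leadingCoeff = (-1 : ℝ) ^ p.natDegree * p.leadingCoeff := by
    rw [hs, Polynomial.leadingCoeff_comp (by rw [hnX]; norm_num)]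
    rw [leadingCoeff_neg, leadingCoeff_X]
    ring
  have hs0 : s ≠ 0 := by
    intro h
    apply leadingCoeff_ne_zero.mpr hp
    have : s.leadingCoeff = 0 := by rw [h]; simp
    rw [hlead] at this
    rcases mul_eq_zero.mp this with h' | h'
    · exact absurd h' (pow_ne_zero _ (by norm_num))
    · exact h'
  have heval : ∀ x : ℝ, s.eval x = p.eval (-x) := by
    intro x; rw [hs, eval_comp, eval_neg, eval_X]
  have hbot : ∀ P : ℝ → Prop,
      (∀ᶠ x in Filter.atBot, P x) ↔ (∀ᶠ x in Filter.atTop, P (-x)) := by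
    intro P
    rw [← Filter.map_neg_atTop, Filter.eventually_map]
  constructor
  · rw [hbot, ← hlead, ← evTop_neg_iff s hs0]
    exact eventually_congr (Eventually.of_forall fun x => by rw [heval])
  · rw [hbot, ← hlead, ← evTop_pos_iff s hs0]
    exact eventually_congr (Eventually.of_forall fun x => by rw [heval])

private lemma rhs_iff (n : ℕ) (q : Polynomial ℝ) (hq : q.natDegree ≤ n) (hq0 : q ≠ 0)
    (c : ℝ) :
    (∃ k ≤ n, (∀ j, k < j → j ≤ n → q.coeff j = 0) ∧ (-1 : ℝ) ^ k * q.coeff k * c > 0) ↔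
      (-1 : ℝ) ^ q.natDegree * q.leadingCoeff * c > 0 := by
  constructor
  · rintro ⟨k, hk, hz, hlt⟩
    rcases lt_trichotomy k q.natDegree with h | h | h
    · exact absurd (hz q.natDegree h hq) (leadingCoeff_ne_zero.mpr hq0)
    · rw [Polynomial.leadingCoeff, ← h]; exact hlt
    · rw [coeff_eq_zero_of_natDegree_lt h] at hlt
      simp at hlt
  · intro h
    exact ⟨q.natDegree, hq, fun j hj _ => coeff_eq_zero_of_natDegree_lt hj,
      by rwa [Polynomial.leadingCoeff] at h⟩

theorem stmt10 (n : ℕ) (q : Polynomial ℝ) (hq : q.natDegree ≤ n) :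
    ((∀ᶠ x in Filter.atBot, q.eval x < 0) ↔
      ∃ k ≤ n, (∀ j, k < j → j ≤ n → q.coeff j = 0) ∧ (-1 : ℝ) ^ k * q.coeff k < 0) ∧
    ((∀ᶠ x in Filter.atBot, q.eval x > 0) ↔
      ∃ k ≤ n, (∀ j, k < j → j ≤ n → q.coeff j = 0) ∧ (-1 : ℝ) ^ k * q.coeff k > 0) := by
  by_cases hq0 : q = 0
  · subst hq0
    simp
    exact fun x => ⟨x, le_rfl⟩
  · obtain ⟨h1, h2⟩ := evBot_iff q hq0
    have R1 := rhs_iff n q hq hq0 (-1)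
    have R2 := rhs_iff n q hq hq0 1
    constructor
    · rw [h1]
      rw [show ((-1:ℝ) ^ q.natDegree * q.leadingCoeff < 0) ↔
          ((-1:ℝ) ^ q.natDegree * q.leadingCoeff * (-1) > 0) by constructor <;> intro <;> linarith]
      rw [← R1]
      constructor <;> rintro ⟨k, hk, hz, hlt⟩ <;> exact ⟨k, hk, hz, by linarith⟩
    · rw [h2]
      rw [show (0 < (-1:ℝ) ^ q.natDegree * q.leadingCoeff) ↔
          ((-1:ℝ) ^ q.natDegree * q.leadingCoeff * 1 > 0) by constructor <;> intro <;> linarith]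
      rw [← R2]
      constructor <;> rintro ⟨k, hk, hz, hlt⟩ <;> exact ⟨k, hk, hz, by linarith⟩
end

section
/- Let n ≥ 1, let f ∈ ℝ[X] with natDegree f ≤ n, and let s = (s_1, …, s_n) ∈ {−1,0,1}^n with s ≠ (0, …, 0). Let (q_k)_{k∈K} be a finite family of real polynomials and (ρ_k)_{k∈K} a family of relations with each ρ_k ∈ {=, ≠, <, ≤, ≥, >}. Then there exists θ ∈ ℝ such that for every k ∈ K: if there exists x ∈ ℝ which is a Thom root of f with code s at level n and which satisfies q_k(x) ρ_k 0, then q_k(θ) ρ_k 0. -/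
/-!
Going down from `f⁽ⁿ⁾`, which is constant, the mean value theorem shows that each `f⁽ⁱ⁾` that
has the same sign at both ends of `[ξ, η]` keeps that sign on the whole interval, because
`f⁽ⁱ⁺¹⁾` does. For `i = 0` this makes `f` vanish on `[ξ, η]` when `ξ` and `η` are Thom roots
with the same code, so `ξ < η` would force `f = 0` and hence `s = 0`. Thus the Thom root with a
nonzero code is unique, and `θ` can be taken to be it.
-/

open Polynomial Filter Set Topology

namespace Real

theorem sign_monotone : Monotone Real.sign := by
  intro a b hab
  unfold Real.sign
  split_ifs <;> linarith

theorem sign_nonneg_iff {r : ℝ} : 0 ≤ Real.sign r ↔ 0 ≤ r := by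
  unfold Real.sign
  split_ifs <;> constructor <;> intro <;> linarith

theorem sign_nonpos_iff {r : ℝ} : Real.sign r ≤ 0 ↔ r ≤ 0 := by
  unfold Real.sign
  split_ifs <;> constructor <;> intro <;> linarith

theorem sign_eq_of_sign_deriv_eq {f : ℝ → ℝ} {a b : ℝ} (hf : Differentiable ℝ f)
    (hf' : ∀ x ∈ Icc a b, Real.sign (deriv f x) = Real.sign (deriv f a))
    (hab : Real.sign (f a) = Real.sign (f b)) {x : ℝ} (hx : x ∈ Icc a b) :
    Real.sign (f x) = Real.sign (f a) := by
  have ha : a ∈ Icc a b := left_mem_Icc.2 (hx.1.trans hx.2)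
  have hb : b ∈ Icc a b := right_mem_Icc.2 (hx.1.trans hx.2)
  rcases le_or_gt 0 (deriv f a) with h0 | h0
  · have hmono : MonotoneOn f (Icc a b) :=
      monotoneOn_of_deriv_nonneg (convex_Icc a b) hf.continuous.continuousOn
        hf.differentiableOn fun y hy =>
          sign_nonneg_iff.1 ((hf' y (interior_subset hy)).symm ▸ sign_nonneg_iff.2 h0)
    exact le_antisymm (hab ▸ sign_monotone (hmono hx hb hx.2))
      (sign_monotone (hmono ha hx hx.1))
  · have hanti : AntitoneOn f (Icc a b) :=
      antitoneOn_of_deriv_nonpos (convex_Icc a b) hf.continuous.continuousOn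
        hf.differentiableOn fun y hy =>
          sign_nonpos_iff.1 ((hf' y (interior_subset hy)).symm ▸ sign_nonpos_iff.2 h0.le)
    exact le_antisymm (sign_monotone (hanti ha hx hx.1))
      (hab ▸ sign_monotone (hanti hx hb hx.2))

end Real

theorem Polynomial.sign_iterate_derivative_eval_eq_of_mem_Icc {g : ℝ[X]} {m : ℕ}
    (hg : derivative^[m] g = 0) {a b : ℝ}
    (hab : ∀ i < m, Real.sign ((derivative^[i] g).eval a) = Real.sign ((derivative^[i] g).eval b))
    (i : ℕ) {x : ℝ} (hx : x ∈ Icc a b) :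
    Real.sign ((derivative^[i] g).eval x) = Real.sign ((derivative^[i] g).eval a) := by
  induction m generalizing g i x with
  | zero => simp [show g = 0 from hg]
  | succ m ih =>
    have ih' := ih (g := derivative g) (by rwa [← Function.iterate_succ_apply])
      fun i hi => by simpa only [← Function.iterate_succ_apply] using hab (i + 1) (by omega)
    cases i with
    | zero =>
      refine Real.sign_eq_of_sign_deriv_eq (f := fun x => g.eval x) g.differentiable
        (fun y hy => ?_) (hab 0 (by omega)) hx
      simpa only [Polynomial.deriv, Function.iterate_zero, id] using ih' 0 hy
    | succ i => simpa only [Function.iterate_succ_apply] using ih' i hx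

section IsThomRoot

variable {n : ℕ} {f : ℝ[X]} {s : Fin n → ℝ} {ξ η : ℝ}

theorem IsThomRoot.sign_iterate_derivative_eval_eq (hξ : IsThomRoot n f s ξ)
    (hη : IsThomRoot n f s η) :
    ∀ i < n + 1,
      Real.sign ((derivative^[i] f).eval ξ) = Real.sign ((derivative^[i] f).eval η)
  | 0, _ => by simp [hξ.1, hη.1]
  | i + 1, hi => (hξ.2 ⟨i, by omega⟩).trans (hη.2 ⟨i, by omega⟩).symm

theorem IsThomRoot.eq_zero_of_lt (hf : f.natDegree ≤ n) (hξ : IsThomRoot n f s ξ)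
    (hη : IsThomRoot n f s η) (hlt : ξ < η) : f = 0 := by
  have hroot : Icc ξ η ⊆ {x | f.IsRoot x} := fun x hx => by
    simpa [hξ.1, Real.sign_eq_zero_iff] using
      sign_iterate_derivative_eval_eq_of_mem_Icc (iterate_derivative_eq_zero (Nat.lt_succ_of_le hf))
        (hξ.sign_iterate_derivative_eval_eq hη) 0 hx
  exact eq_zero_of_infinite_isRoot f ((Icc_infinite hlt).mono hroot)

theorem IsThomRoot.code_eq_zero (h : IsThomRoot n 0 s ξ) : s = 0 :=
  funext fun i => by simpa using (h.2 i).symm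

theorem IsThomRoot.eq (hf : f.natDegree ≤ n) (hs0 : s ≠ 0) (hξ : IsThomRoot n f s ξ)
    (hη : IsThomRoot n f s η) : ξ = η := by
  by_contra hne
  obtain rfl : f = 0 :=
    (lt_or_gt_of_ne hne).elim (hξ.eq_zero_of_lt hf hη) (hη.eq_zero_of_lt hf hξ)
  exact hs0 hξ.code_eq_zero

end IsThomRoot

theorem stmt11_general (n : ℕ) (f : Polynomial ℝ) (hf : f.natDegree ≤ n)
    (s : Fin n → ℝ)
    (hs0 : s ≠ fun _ => 0)
    {K : Type*} (q : K → Polynomial ℝ) (ρ : K → SignRel) :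
    ∃ θ : ℝ, ∀ k : K,
      (∃ x : ℝ, IsThomRoot n f s x ∧ (ρ k).holds ((q k).eval x)) →
      (ρ k).holds ((q k).eval θ) := by
  obtain ⟨θ, hθ⟩ : ∃ θ, ∀ x, IsThomRoot n f s x → x = θ := by
    by_cases h : ∃ ξ, IsThomRoot n f s ξ
    · obtain ⟨ξ, hξ⟩ := h
      exact ⟨ξ, fun x hx => hx.eq hf hs0 hξ⟩
    · exact ⟨0, fun x hx => (h ⟨x, hx⟩).elim⟩
  exact ⟨θ, fun k ⟨x, hx, hk⟩ => hθ x hx ▸ hk⟩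

theorem stmt11 (n : ℕ) (hn : 1 ≤ n) (f : Polynomial ℝ) (hf : f.natDegree ≤ n)
    (s : Fin n → ℝ) (hs : ∀ i, s i = -1 ∨ s i = 0 ∨ s i = 1)
    (hs0 : s ≠ fun _ => 0)
    {K : Type*} [Fintype K] (q : K → Polynomial ℝ) (ρ : K → SignRel) :
    ∃ θ : ℝ, ∀ k : K,
      (∃ x : ℝ, IsThomRoot n f s x ∧ (ρ k).holds ((q k).eval x)) →
      (ρ k).holds ((q k).eval θ) :=
  stmt11_general n f hf s hs0 q ρ
end

section
/- Let n ≥ 1, let f ∈ ℝ[X] with natDegree f ≤ n, let s = (s_1, …, s_n) ∈ {−1,0,1}^n with s ≠ (0, …, 0), and suppose ξ ∈ ℝ is a Thom root of f with code s at level n. Let (q_k)_{k∈K} be a finite family of real polynomials and (ρ_k)_{k∈K} relations with each ρ_k ∈ {=, ≠, <, ≤, ≥, >}. For each k define the condition C_k: if ρ_k is '=', C_k says q_k is the zero polynomial; if ρ_k is '≠', C_k says q_k is not the zero polynomial; if ρ_k is '<', C_k says q_k(ξ) < 0, or q_k(ξ) = 0 and ∀ᶠ t in 𝓝[>] ξ,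 q_k(t) < 0; if ρ_k is '>', C_k says q_k(ξ) > 0, or q_k(ξ) = 0 and ∀ᶠ t in 𝓝[>] ξ, q_k(t) > 0; if ρ_k is '≤' (resp. '≥'), C_k is the disjunction of the condition for '<' (resp. '>') and the condition for '='. Then there exists ζ ∈ ℝ such that for every k ∈ K, if C_k holds then q_k(ζ) ρ_k 0. -/
open Polynomial Filter Set Topology

/-- The condition "the virtual substitution of (f,s)+ε into (q ρ 0) holds",
expressed semantically at the Thom root ξ. -/
def EpsCond (ξ : ℝ) (q : Polynomial ℝ) : SignRel → Prop
  | .eq => q = 0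
  | .ne => q ≠ 0
  | .lt => q.eval ξ < 0 ∨ (q.eval ξ = 0 ∧ ∀ᶠ t in 𝓝[>] ξ, q.eval t < 0)
  | .gt => q.eval ξ > 0 ∨ (q.eval ξ = 0 ∧ ∀ᶠ t in 𝓝[>] ξ, q.eval t > 0)
  | .le => (q.eval ξ < 0 ∨ (q.eval ξ = 0 ∧ ∀ᶠ t in 𝓝[>] ξ, q.eval t < 0)) ∨ q = 0
  | .ge => (q.eval ξ > 0 ∨ (q.eval ξ = 0 ∧ ∀ᶠ t in 𝓝[>] ξ, q.eval t > 0)) ∨ q = 0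

/-! Each `q k ρ k 0` whose condition holds is true on a right neighbourhood of `ξ`: a strict
sign at `ξ` persists by continuity, a nonzero polynomial has only finitely many roots, and in the
remaining cases the sign holds eventually to the right by hypothesis. Since `𝓝[>] ξ` is a proper
filter, finitely many such neighbourhoods have a common point `ζ`. -/

lemma Polynomial.eventually_nhdsNE_eval_ne_zero {R : Type*} [CommRing R] [IsDomain R]
    [TopologicalSpace R] [T1Space R] {q : R[X]} (hq : q ≠ 0) (ξ : R) :
    ∀ᶠ t in 𝓝[≠] ξ, q.eval t ≠ 0 :=
  (eventually_cofinite_not_isRoot hq).filter_mono (nhdsNE_le_cofinite ξ)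

section RightNeighbourhood

variable {α : Type*} [TopologicalSpace α] [Preorder α] {g : α → ℝ} {ξ : α}

lemma ContinuousAt.eventually_nhdsGT_neg (hg : ContinuousAt g ξ)
    (h : g ξ < 0 ∨ (g ξ = 0 ∧ ∀ᶠ t in 𝓝[>] ξ, g t < 0)) :
    ∀ᶠ t in 𝓝[>] ξ, g t < 0 :=
  h.elim (fun h ↦ (hg.eventually_lt continuousAt_const h).filter_mono nhdsWithin_le_nhds)
    And.right

lemma ContinuousAt.eventually_nhdsGT_pos (hg : ContinuousAt g ξ)
    (h : g ξ > 0 ∨ (g ξ = 0 ∧ ∀ᶠ t in 𝓝[>] ξ, g t > 0)) :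
    ∀ᶠ t in 𝓝[>] ξ, g t > 0 :=
  h.elim (fun h ↦ (continuousAt_const.eventually_lt hg h).filter_mono nhdsWithin_le_nhds)
    And.right

end RightNeighbourhood

lemma EpsCond.eventually_holds {ξ : ℝ} {q : ℝ[X]} {r : SignRel} (h : EpsCond ξ q r) :
    ∀ᶠ t in 𝓝[>] ξ, r.holds (q.eval t) := by
  cases r with
  | eq => subst h; simp [SignRel.holds]
  | ne => exact (q.eventually_nhdsNE_eval_ne_zero h ξ).filter_mono (nhdsGT_le_nhdsNE ξ)
  | lt => exact q.continuousAt.eventually_nhdsGT_neg h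
  | gt => exact q.continuousAt.eventually_nhdsGT_pos h
  | le =>
    rcases h with h | rfl
    · exact (q.continuousAt.eventually_nhdsGT_neg h).mono fun _ ↦ le_of_lt
    · simp [SignRel.holds]
  | ge =>
    rcases h with h | rfl
    · exact (q.continuousAt.eventually_nhdsGT_pos h).mono fun _ ↦ le_of_lt
    · simp [SignRel.holds]

theorem stmt12_general
    (ξ : ℝ)
    {K : Type*} [Fintype K] (q : K → Polynomial ℝ) (ρ : K → SignRel) :
    ∃ ζ : ℝ, ∀ k : K, EpsCond ξ (q k) (ρ k) → (ρ k).holds ((q k).eval ζ) :=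
  (eventually_all.2 fun _ ↦ eventually_imp_distrib_left.2 EpsCond.eventually_holds).exists

theorem stmt12 (n : ℕ) (hn : 1 ≤ n) (f : Polynomial ℝ) (hf : f.natDegree ≤ n)
    (s : Fin n → ℝ) (hs : ∀ i, s i = -1 ∨ s i = 0 ∨ s i = 1)
    (hs0 : s ≠ fun _ => 0)
    (ξ : ℝ) (hξ : IsThomRoot n f s ξ)
    {K : Type*} [Fintype K] (q : K → Polynomial ℝ) (ρ : K → SignRel) :
    ∃ ζ : ℝ, ∀ k : K, EpsCond ξ (q k) (ρ k) → (ρ k).holds ((q k).eval ζ) :=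
  stmt12_general ξ q ρ
end

section
/- For all a, b, c ∈ ℝ: (∃ x ∈ ℝ, a·x² + b·x + c = 0 ∧ 2·a·x + b > 0 ∧ 2·a > 0) ↔ (a > 0 ∧ 4·a·c − b² < 0). -/
theorem stmt14 (a b c : ℝ) :
    (∃ x : ℝ, a * x ^ 2 + b * x + c = 0 ∧ 2 * a * x + b > 0 ∧ 2 * a > 0) ↔
      (a > 0 ∧ 4 * a * c - b ^ 2 < 0) := by
  constructor
  · rintro ⟨x, h0, h1, h2⟩
    have ha : a > 0 := by linarith
    refine ⟨ha, ?_⟩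
    have key : (2 * a * x + b) ^ 2 = b ^ 2 - 4 * a * c + 4 * a * (a * x ^ 2 + b * x + c) := by ring
    nlinarith [sq_nonneg (2 * a * x + b), h1]
  · rintro ⟨ha, hd⟩
    have hdpos : (0:ℝ) < b ^ 2 - 4 * a * c := by linarith
    set s := Real.sqrt (b ^ 2 - 4 * a * c) with hs
    have hs2 : s ^ 2 = b ^ 2 - 4 * a * c := Real.sq_sqrt (le_of_lt hdpos)
    have hspos : 0 < s := Real.sqrt_pos.mpr hdpos
    refine ⟨(-b + s) / (2 * a), ?_, ?_, by linarith⟩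
    · have h2a : (2 * a) ≠ 0 := by positivity
      field_simp
      nlinarith [hs2]
    · have h2a : (2 * a) ≠ 0 := by positivity
      have : 2 * a * ((-b + s) / (2 * a)) = -b + s := by field_simp
      rw [this]; linarith
end

section
/- For all a, b, c ∈ ℝ: (∃ x ∈ ℝ, a·x² + b·x + c = 0 ∧ 2·a·x + b < 0 ∧ 2·a < 0) ↔ (a < 0 ∧ 4·a·c − b² < 0). -/
theorem stmt17 (a b c : ℝ) :
    (∃ x : ℝ, a * x ^ 2 + b * x + c = 0 ∧ 2 * a * x + b < 0 ∧ 2 * a < 0) ↔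
      (a < 0 ∧ 4 * a * c - b ^ 2 < 0) := by
  constructor
  · rintro ⟨x, h0, h1, h2⟩
    have ha : a < 0 := by linarith
    refine ⟨ha, ?_⟩
    nlinarith [mul_pos (neg_pos.2 h1) (neg_pos.2 h1)]
  · rintro ⟨ha, hd⟩
    set s := Real.sqrt (b^2 - 4*a*c) with hs
    have hd' : (0:ℝ) < b^2 - 4*a*c := by linarith
    have hs2 : s^2 = b^2 - 4*a*c := Real.sq_sqrt (le_of_lt hd')
    have hspos : 0 < s := Real.sqrt_pos.mpr hd'
    have ha' : a ≠ 0 := ne_of_lt ha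
    refine ⟨(-b - s)/(2*a), ?_, ?_, by linarith⟩
    · field_simp
      ring_nf
      nlinarith [hs2]
    · have h2 : 2*a * ((-b-s)/(2*a)) = -b - s := by field_simp
      rw [h2]; linarith
end
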